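/- arXiv:0711.0464 — 5 statements merged into one kernel-verified Lean document; each statement's English description precedes it below -/
import Mathlib

section
/- Let N be a positive integer and let C be an N×N matrix with integer entries. Then C is anti-symmetric and has rank 2 if and only if there exists a 2×N matrix B with integer entries such that B has rank 2 and C = Bᵀ·J·B. -/
/-! Over `ℤ`, the column lattice of `C` is free, so `C = E * B` with `E` injective and `B` having an
*integral* right inverse `S` (the coordinate map onto `ℤᵏ` is surjective and `ℤᵏ` is projective);
comparing ranks over `ℚ` gives `k = rank C = 2`. For anti-symmetric `C` the identity
`C * (S * B) = C` yields `C = Bᵀ * A * B` with `A = Sᵀ * C * S` anti-symmetric of size two, so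
`A = a • J = Dᵀ * J * D` for `D = !![a, 0; 0, 1]`, and `D * B` is the required matrix.
Conversely, `J` is invertible and `B` has a right inverse over `ℚ`, so `Bᵀ * J * B` has the rank
of `B`. -/

open Matrix

def Jmat : Matrix (Fin 2) (Fin 2) ℤ := !![0, 1; -1, 0]

namespace Matrix

variable {l m n R K : Type*}

theorem exists_rank_factorization [Finite m] [Fintype n] [DecidableEq n] [CommRing R]
    [IsDomain R] [IsPrincipalIdealRing R] (C : Matrix m n R) :
    ∃ (k : ℕ) (E : Matrix m (Fin k) R) (B : Matrix (Fin k) n R) (S : Matrix n (Fin k) R),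
      Function.Injective E.mulVec ∧ B * S = 1 ∧ C = E * B := by
  obtain ⟨k, b⟩ := Submodule.basisOfPid (Pi.basisFun R m) (LinearMap.range C.mulVecLin)
  let e := (LinearMap.range C.mulVecLin).subtype ∘ₗ b.equivFun.symm.toLinearMap
  let g := b.equivFun.toLinearMap ∘ₗ C.mulVecLin.rangeRestrict
  obtain ⟨s, hgs⟩ := Module.projective_lifting_property g LinearMap.id
    (b.equivFun.surjective.comp C.mulVecLin.surjective_rangeRestrict)
  refine ⟨k, e.toMatrix', g.toMatrix', s.toMatrix', ?_, ?_, ?_⟩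
  · rw [show e.toMatrix'.mulVec = e from funext e.toMatrix'_mulVec]
    exact Subtype.val_injective.comp b.equivFun.symm.injective
  · rw [← LinearMap.toMatrix'_comp, hgs, LinearMap.toMatrix'_id]
  · have hC : e ∘ₗ g = C.mulVecLin := by ext; simp [e, g]
    rw [← LinearMap.toMatrix'_comp, hC]
    exact (LinearMap.toMatrix'_toLin' C).symm

theorem rank_map_algebraMap_of_injective_mulVec [Fintype m] [Fintype l] [CommRing R] [Field K]
    [Algebra R K] [FaithfulSMul R K] {E : Matrix m l R} (hE : Function.Injective E.mulVec) :
    (E.map (algebraMap R K)).rank = Fintype.card l := by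
  rw [← rank_transpose]
  apply LinearIndependent.rank_matrix
  exact linearIndependent_algebraMap_comp_iff.2 (mulVec_injective_iff.1 hE)

theorem rank_mul_eq_left_of_mul_eq_one [CommRing R] [StrongRankCondition R] [Fintype n]
    [DecidableEq n] [Fintype l] {A : Matrix m n R} {B : Matrix n l R} {S : Matrix l n R}
    (hBS : B * S = 1) : (A * B).rank = A.rank := by
  refine le_antisymm (rank_mul_le_left A B) ?_
  calc A.rank = (A * B * S).rank := by rw [Matrix.mul_assoc, hBS, Matrix.mul_one]
    _ ≤ (A * B).rank := rank_mul_le_left _ _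

theorem exists_mul_eq_one_of_rank_eq_card [Fintype m] [DecidableEq m] [Fintype n] [Field K]
    {B : Matrix m n K} (hB : B.rank = Fintype.card m) : ∃ T : Matrix n m K, B * T = 1 := by
  refine mulVec_surjective_iff_exists_right_inverse.1 ?_
  have : LinearMap.range B.mulVecLin = ⊤ := by
    apply Submodule.eq_top_of_finrank_eq
    rwa [Module.finrank_fintype_fun_eq_card]
  exact LinearMap.range_eq_top.1 this

theorem rank_transpose_mul_mul_of_isUnit_det [Fintype m] [DecidableEq m] [Fintype n] [Field K]
    {A : Matrix m m K} (hA : IsUnit A.det) {B : Matrix m n K} (hB : B.rank = Fintype.card m) :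
    (Bᵀ * A * B).rank = Fintype.card m := by
  obtain ⟨T, hT⟩ := exists_mul_eq_one_of_rank_eq_card hB
  rw [rank_mul_eq_left_of_mul_eq_one hT, rank_mul_eq_left_of_isUnit_det _ _ hA, rank_transpose, hB]

theorem transpose_conj_eq_neg_of_transpose_eq_neg [Fintype m] [CommRing R] {A : Matrix m m R}
    (hA : Aᵀ = -A) (P : Matrix m n R) : (Pᵀ * A * P)ᵀ = -(Pᵀ * A * P) := by
  simp only [transpose_mul, transpose_transpose, hA, Matrix.mul_neg, Matrix.neg_mul,
    Matrix.mul_assoc]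

theorem eq_transpose_mul_mul_of_mul_eq [Fintype n] [CommRing R] {C P : Matrix n n R}
    (hC : Cᵀ = -C) (hP : C * P = C) : C = Pᵀ * C * P := by
  symm
  calc Pᵀ * C * P = Pᵀ * C := by rw [Matrix.mul_assoc, hP]
    _ = (Cᵀ * P)ᵀ := by rw [transpose_mul, transpose_transpose]
    _ = C := by rw [hC, Matrix.neg_mul, hP, transpose_neg, hC, neg_neg]

theorem map_intCast_mul [Fintype m] [Ring K] (A : Matrix l m ℤ) (B : Matrix m n ℤ) :
    (A * B).map (Int.cast : ℤ → K) = A.map (Int.cast : ℤ → K) * B.map (Int.cast : ℤ → K) :=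
  Matrix.map_mul (f := Int.castRingHom K)

end Matrix

theorem exists_eq_smul_Jmat_of_transpose_eq_neg {A : Matrix (Fin 2) (Fin 2) ℤ} (hA : Aᵀ = -A) :
    ∃ a : ℤ, A = a • Jmat := by
  have h := fun i j => congr_fun₂ hA i j
  simp only [transpose_apply, neg_apply] at h
  refine ⟨A 0 1, ?_⟩
  ext i j
  fin_cases i <;> fin_cases j <;> simp [Jmat] <;> linarith [h 0 0, h 1 1, h 0 1]

theorem smul_Jmat_eq_transpose_mul_mul (a : ℤ) :
    a • Jmat = !![a, 0; 0, 1]ᵀ * Jmat * !![a, 0; 0, 1] := by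
  ext i j
  fin_cases i <;> fin_cases j <;> simp [Jmat, mul_apply, Fin.sum_univ_two]

theorem isUnit_det_map_Jmat : IsUnit (Jmat.map (Int.cast : ℤ → ℚ)).det := by
  simp [Jmat, det_fin_two]

theorem exists_eq_transpose_mul_Jmat_mul {n : Type*} [Fintype n] [DecidableEq n]
    {C : Matrix n n ℤ} (hC : Cᵀ = -C) (hrank : (C.map (Int.cast : ℤ → ℚ)).rank = 2) :
    ∃ B : Matrix (Fin 2) n ℤ, (B.map (Int.cast : ℤ → ℚ)).rank = 2 ∧ C = Bᵀ * Jmat * B := by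
  obtain ⟨k, E, B, S, hE, hBS, hCEB⟩ := C.exists_rank_factorization
  obtain rfl : k = 2 := by
    have hBSq : B.map (Int.cast : ℤ → ℚ) * S.map (Int.cast : ℤ → ℚ) = 1 := by
      rw [← map_intCast_mul, hBS, Matrix.map_one (Int.cast : ℤ → ℚ) Int.cast_zero Int.cast_one]
    rw [hCEB, map_intCast_mul, rank_mul_eq_left_of_mul_eq_one hBSq] at hrank
    calc k = (E.map (algebraMap ℤ ℚ)).rank := by
          rw [rank_map_algebraMap_of_injective_mulVec hE, Fintype.card_fin]
      _ = 2 := hrank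
  obtain ⟨A, hA, hCA⟩ : ∃ A : Matrix (Fin 2) (Fin 2) ℤ, Aᵀ = -A ∧ C = Bᵀ * A * B := by
    refine ⟨Sᵀ * C * S, transpose_conj_eq_neg_of_transpose_eq_neg hC S, ?_⟩
    have hSB : C * (S * B) = C := by
      rw [hCEB, Matrix.mul_assoc, ← Matrix.mul_assoc B, hBS, Matrix.one_mul]
    calc C = (S * B)ᵀ * C * (S * B) := eq_transpose_mul_mul_of_mul_eq hC hSB
      _ = Bᵀ * (Sᵀ * C * S) * B := by simp only [transpose_mul, Matrix.mul_assoc]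
  obtain ⟨a, rfl⟩ := exists_eq_smul_Jmat_of_transpose_eq_neg hA
  have hCD : C = (!![a, 0; 0, 1] * B)ᵀ * Jmat * (!![a, 0; 0, 1] * B) := by
    rw [hCA, smul_Jmat_eq_transpose_mul_mul, transpose_mul]
    simp only [Matrix.mul_assoc]
  refine ⟨!![a, 0; 0, 1] * B, le_antisymm ?_ ?_, hCD⟩
  · exact (rank_le_card_height _).trans_eq (Fintype.card_fin 2)
  · calc 2 = (C.map (Int.cast : ℤ → ℚ)).rank := hrank.symm
      _ ≤ _ := by
        rw [hCD, map_intCast_mul]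
        exact rank_mul_le_right _ _

theorem stmt0_general (N : ℕ) (C : Matrix (Fin N) (Fin N) ℤ) :
    (Cᵀ = -C ∧ (C.map (Int.cast : ℤ → ℚ)).rank = 2) ↔
      ∃ B : Matrix (Fin 2) (Fin N) ℤ,
        (B.map (Int.cast : ℤ → ℚ)).rank = 2 ∧ C = Bᵀ * Jmat * B := by
  constructor
  · rintro ⟨hC, hrank⟩
    exact exists_eq_transpose_mul_Jmat_mul hC hrank
  · rintro ⟨B, hB, rfl⟩
    refine ⟨transpose_conj_eq_neg_of_transpose_eq_neg (by decide) B, ?_⟩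
    rw [map_intCast_mul, map_intCast_mul, transpose_map]
    exact rank_transpose_mul_mul_of_isUnit_det isUnit_det_map_Jmat hB

/-- An `N×N` integer matrix `C` is anti-symmetric of rank 2 (over `ℚ`)
iff `C = Bᵀ·J·B` for some `2×N` integer matrix `B` of rank 2. -/
theorem stmt0 (N : ℕ) (hN : 0 < N) (C : Matrix (Fin N) (Fin N) ℤ) :
    (Cᵀ = -C ∧ (C.map (Int.cast : ℤ → ℚ)).rank = 2) ↔
      ∃ B : Matrix (Fin 2) (Fin N) ℤ,
        (B.map (Int.cast : ℤ → ℚ)).rank = 2 ∧ C = Bᵀ * Jmat * B :=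
  stmt0_general N C
end

section
/- Let B and B' be 2×N integer matrices, each of rank 2, such that Bᵀ·J·B = B'ᵀ·J·B'. If the greatest common divisor of all entries of the matrix Bᵀ·J·B equals 1, then the subgroup of ℤ^N generated by the rows of B coincides with the subgroup of ℤ^N generated by the rows of B'. -/
open Matrix

lemma entryJ (N : ℕ) (B : Matrix (Fin 2) (Fin N) ℤ) (j k : Fin N) :
    (Bᵀ * Jmat * B) j k = B 0 j * B 1 k - B 1 j * B 0 k := by
  simp [Matrix.mul_apply, Jmat, Fin.sum_univ_two]
  ring

lemma bezout {ι : Type*} [DecidableEq ι] (s : Finset ι) (f : ι → ℤ) :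
    ∃ c : ι → ℤ, ∑ i ∈ s, c i * f i = s.gcd f := by
  classical
  induction s using Finset.induction_on with
  | empty => exact ⟨0, by simp⟩
  | @insert a s ha ih =>
    obtain ⟨c, hc⟩ := ih
    refine ⟨fun i => if i = a then Int.gcdA (f a) (s.gcd f) else Int.gcdB (f a) (s.gcd f) * c i, ?_⟩
    rw [Finset.sum_insert ha, Finset.gcd_insert]
    have h1 : ∑ i ∈ s, (if i = a then Int.gcdA (f a) (s.gcd f) else Int.gcdB (f a) (s.gcd f) * c i) * f i
        = Int.gcdB (f a) (s.gcd f) * ∑ i ∈ s, c i * f i := by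
      rw [Finset.mul_sum]
      refine Finset.sum_congr rfl (fun i hi => ?_)
      rw [if_neg (by rintro rfl; exact ha hi)]
      ring
    rw [h1, hc]
    simp only [eq_self_iff_true, if_true]
    have := Int.gcd_eq_gcd_ab (f a) (s.gcd f)
    have hco : (gcd (f a) (s.gcd f) : ℤ) = ↑(Int.gcd (f a) (s.gcd f)) := by
      rw [Int.coe_gcd]
    rw [hco, this]; ring

lemma half (N : ℕ) (B B' : Matrix (Fin 2) (Fin N) ℤ)
    (heq : Bᵀ * Jmat * B = B'ᵀ * Jmat * B')
    (hgcd : Finset.univ.gcd (fun p : Fin N × Fin N => (Bᵀ * Jmat * B) p.1 p.2) = 1) :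
    AddSubgroup.closure (Set.range fun i : Fin 2 => (fun j => B' i j)) ≤
      AddSubgroup.closure (Set.range fun i : Fin 2 => (fun j => B i j)) := by
  rw [AddSubgroup.closure_le]
  rintro _ ⟨i, rfl⟩
  obtain ⟨c, hc⟩ := bezout Finset.univ (fun p : Fin N × Fin N => (Bᵀ * Jmat * B) p.1 p.2)
  rw [hgcd] at hc
  set M : Matrix (Fin N) (Fin N) ℤ := Bᵀ * Jmat * B with hMdef
  have hM : ∀ j k, M j k = B 0 j * B 1 k - B 1 j * B 0 k := entryJ N B
  have hM' : ∀ j k, M j k = B' 0 j * B' 1 k - B' 1 j * B' 0 k := by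
    intro j k
    have h := entryJ N B' j k
    rw [← heq] at h
    exact h
  have hv : ∀ j : Fin N, (fun m => M j m) ∈
      AddSubgroup.closure (Set.range fun i : Fin 2 => (fun j => B i j)) := by
    intro j
    have hvexpr : (fun m => M j m)
        = (B 0 j) • (fun m => B 1 m) - (B 1 j) • (fun m => B 0 m) := by
      funext m
      simp only [Pi.sub_apply, Pi.smul_apply, smul_eq_mul, hM]
    rw [hvexpr]
    exact sub_mem
      (zsmul_mem (AddSubgroup.subset_closure (Set.mem_range_self (1 : Fin 2))) _)
      (zsmul_mem (AddSubgroup.subset_closure (Set.mem_range_self (0 : Fin 2))) _)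
  have hrow : (fun j => B' i j)
      = ∑ p : Fin N × Fin N,
          ((c p * B' i p.2) • (fun m => M p.1 m) - (c p * B' i p.1) • (fun m => M p.2 m)) := by
    funext m
    rw [Finset.sum_apply]
    simp only [Pi.sub_apply, Pi.smul_apply, smul_eq_mul]
    have step : ∀ p : Fin N × Fin N,
        c p * B' i p.2 * M p.1 m - c p * B' i p.1 * M p.2 m = (c p * M p.1 p.2) * B' i m := by
      intro p
      rw [hM' p.1 m, hM' p.2 m, hM' p.1 p.2]
      have hi : i = 0 ∨ i = 1 := by fin_cases i; exacts [Or.inl rfl, Or.inr rfl]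
      rcases hi with rfl | rfl <;> ring
    rw [Finset.sum_congr rfl (fun p _ => step p), ← Finset.sum_mul, hc, one_mul]
  rw [SetLike.mem_coe, show ((fun i j => B' i j) i) = (fun j => B' i j) from rfl, hrow]
  exact AddSubgroup.sum_mem _
    (fun p _ => sub_mem (zsmul_mem (hv p.1) _) (zsmul_mem (hv p.2) _))

/-- If `B`, `B'` are `2×N` integer matrices of rank 2 with
`Bᵀ·J·B = B'ᵀ·J·B'` and the gcd of all entries of `Bᵀ·J·B` is `1`, then the
subgroups of `ℤ^N` generated by the rows of `B` and of `B'` coincide. -/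
theorem stmt2 (N : ℕ) (B B' : Matrix (Fin 2) (Fin N) ℤ)
    (hB : (B.map (Int.cast : ℤ → ℚ)).rank = 2)
    (hB' : (B'.map (Int.cast : ℤ → ℚ)).rank = 2)
    (heq : Bᵀ * Jmat * B = B'ᵀ * Jmat * B')
    (hgcd : Finset.univ.gcd (fun p : Fin N × Fin N => (Bᵀ * Jmat * B) p.1 p.2) = 1) :
    AddSubgroup.closure (Set.range fun i : Fin 2 => (fun j => B i j)) =
      AddSubgroup.closure (Set.range fun i : Fin 2 => (fun j => B' i j)) := by
  have hgcd' : Finset.univ.gcd (fun p : Fin N × Fin N => (B'ᵀ * Jmat * B') p.1 p.2) = 1 :=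
    heq ▸ hgcd
  exact le_antisymm (half N B' B heq.symm hgcd') (half N B B' heq hgcd)
end

section
/- Let b_1,…,b_N ∈ ℤ² be nonzero vectors spanning ℝ², with b_1+…+b_N = 0, ordered counterclockwise, and let Δ be the convex hull of the partial sums p_k = b_1+…+b_k (k = 1,…,N). Then for every 2-dimensional cone C of the secondary fan, the Euclidean area of Δ equals (1/2)·Σ_{1 ≤ i < j ≤ N} |det(b_i,b_j)| − Σ_{{i,j} ∈ L_C} |det(b_i,b_j)|. -/
noncomputable section
open scoped Classical

/-- `det(u,v) = u₁v₂ - v₁u₂` for `u, v ∈ ℝ²`. -/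
def det2 (u v : ℝ × ℝ) : ℝ := u.1 * v.2 - v.1 * u.2

/-- The canonical embedding `ℤ² → ℝ²`. -/
def toR2 (v : ℤ × ℤ) : ℝ × ℝ := ((v.1 : ℝ), (v.2 : ℝ))

/-- Counterclockwise ordering of a family of plane vectors. -/
def CCW {N : ℕ} (b : Fin N → ℝ × ℝ) : Prop :=
  ∃ θ r : Fin N → ℝ, Monotone θ ∧ (∀ i j, θ i < θ j + 2 * Real.pi) ∧
    ∀ i, 0 < r i ∧ b i = (r i * Real.cos (θ i), r i * Real.sin (θ i))

/-- The ray `ℝ_{≥0}·v`. -/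
def rayThru (v : ℝ × ℝ) : Set (ℝ × ℝ) := {x | ∃ t : ℝ, 0 ≤ t ∧ x = t • v}

/-- `C` is a 2-dimensional cone of the secondary fan of `b`: the closure of a
connected component of the complement of the union of the rays `ℝ_{≥0}·b i`. -/
def IsSecCone {N : ℕ} (b : Fin N → ℝ × ℝ) (C : Set (ℝ × ℝ)) : Prop :=
  ∃ x ∈ (⋃ i, rayThru (b i))ᶜ,
    C = closure (connectedComponentIn ((⋃ i, rayThru (b i))ᶜ) x)

/-- The cone `ℝ_{≥0}·u + ℝ_{≥0}·v`. -/
def posCone (u v : ℝ × ℝ) : Set (ℝ × ℝ) :=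
  {x | ∃ s t : ℝ, 0 ≤ s ∧ 0 ≤ t ∧ x = s • u + t • v}

/-- `Σ_{{i,j} ∈ L_C} |det(b i, b j)|`, where `L_C` is the set of 2-element subsets
`{i,j}` with `C ⊆ ℝ_{≥0}·b i + ℝ_{≥0}·b j`. -/
noncomputable def LCsum {N : ℕ} (b : Fin N → ℝ × ℝ) (C : Set (ℝ × ℝ)) : ℝ :=
  ∑ i, ∑ j, if i < j ∧ C ⊆ posCone (b i) (b j) then |det2 (b i) (b j)| else 0

/-!
Extend `b` by zero to `B : ℕ → ℝ²`, with `B i = R i (cos θ i, sin θ i)` for `i < N`. The vertices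
of `Δ` are the partial sums `p m = B 0 + ⋯ + B (m - 1)`, with `p 0 = p N = 0`. Since the `B i` turn counterclockwise through
less than a full turn, every edge line `p k + ℝ B k` supports `Δ`, and seen from the vertex `0`
the other vertices are in counterclockwise order. So the fan triangles `conv {0, p k, p (k + 1)}`
tile `Δ` up to null sets, and the area of `Δ` is `½ Σ_{i<j} det(B i, B j)`.

Let `x = ρ (cos φ, sin φ)` be a point of `C` off all rays. For `i < j` with
`det(B i, B j) ≠ 0`, connectedness gives `C ⊆ cone(B i, B j)` iff `x ∈ cone(B i, B j)`, and this
holds iff "`θ i < φ < θ j`" agrees with "`det(B i, B j) > 0`". Hence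
`Σ_{L_C} |det| = Σ_{i<j} (|det| - det) / 2 + Σ_{θ i < φ < θ j} det(B i, B j)`, and the last sum is
`det(S, -S) = 0`, where `S` is the sum of the `B i` with `θ i < φ`.
-/

open MeasureTheory Real Finset

section det2

@[simp] lemma det2_zero_left (v : ℝ × ℝ) : det2 0 v = 0 := by simp [det2]

@[simp] lemma det2_zero_right (u : ℝ × ℝ) : det2 u 0 = 0 := by simp [det2]

@[simp] lemma det2_self (u : ℝ × ℝ) : det2 u u = 0 := by simp [det2]

lemma det2_anticomm (u v : ℝ × ℝ) : det2 u v = -det2 v u := by simp [det2]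

lemma det2_add_left (u v w : ℝ × ℝ) : det2 (u + v) w = det2 u w + det2 v w := by
  simp [det2]; ring

lemma det2_add_right (u v w : ℝ × ℝ) : det2 u (v + w) = det2 u v + det2 u w := by
  simp [det2]; ring

lemma det2_sub_right (u v w : ℝ × ℝ) : det2 u (v - w) = det2 u v - det2 u w := by
  simp [det2]; ring

lemma det2_neg_right (u v : ℝ × ℝ) : det2 u (-v) = -det2 u v := by
  simp [det2]; ring

lemma det2_smul_left (c : ℝ) (u v : ℝ × ℝ) : det2 (c • u) v = c * det2 u v := by
  simp [det2]; ring

lemma det2_smul_right (c : ℝ) (u v : ℝ × ℝ) : det2 u (c • v) = c * det2 u v := by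
  simp [det2]; ring

lemma det2_sum_left {ι : Type*} (s : Finset ι) (f : ι → ℝ × ℝ) (v : ℝ × ℝ) :
    det2 (∑ i ∈ s, f i) v = ∑ i ∈ s, det2 (f i) v := by
  induction s using Finset.cons_induction <;> simp_all [det2_add_left]

lemma det2_sum_right {ι : Type*} (s : Finset ι) (u : ℝ × ℝ) (f : ι → ℝ × ℝ) :
    det2 u (∑ i ∈ s, f i) = ∑ i ∈ s, det2 u (f i) := by
  induction s using Finset.cons_induction <;> simp_all [det2_add_right]

lemma det2_polar (r s a b : ℝ) :
    det2 (r * cos a, r * sin a) (s * cos b, s * sin b) = r * s * sin (b - a) := by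
  simp [det2, sin_sub]; ring

lemma det2_smul_eq (u v x : ℝ × ℝ) : det2 u v • x = det2 x v • u + det2 u x • v := by
  ext <;> simp [det2] <;> ring

lemma isLinearMap_det2 (u : ℝ × ℝ) : IsLinearMap ℝ (det2 u) :=
  ⟨det2_add_right u, fun c v => det2_smul_right c u v⟩

lemma convex_setOf_le_det2 (u : ℝ × ℝ) (c : ℝ) : Convex ℝ {z : ℝ × ℝ | c ≤ det2 u z} :=
  convex_halfSpace_ge (isLinearMap_det2 u) c

lemma convex_setOf_det2_le (u : ℝ × ℝ) (c : ℝ) : Convex ℝ {z : ℝ × ℝ | det2 u z ≤ c} :=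
  convex_halfSpace_le (isLinearMap_det2 u) c

lemma det2_nonneg_trans {e f x y z : ℝ × ℝ} (hef : 0 < det2 e f)
    (hx : 0 ≤ det2 e x ∧ 0 ≤ det2 x f) (hy : 0 ≤ det2 e y ∧ 0 ≤ det2 y f)
    (hz : 0 ≤ det2 e z ∧ 0 ≤ det2 z f) (hy0 : y ≠ 0)
    (hxy : 0 ≤ det2 x y) (hyz : 0 ≤ det2 y z) : 0 ≤ det2 x z := by
  -- `ℓ w = det2 e w + det2 w f` is a linear form, positive on the cone minus the origin
  have hly : 0 < det2 e y + det2 y f := by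
    refine lt_of_le_of_ne (by linarith) fun h0 => hy0 ?_
    have := det2_smul_eq e f y
    rw [show det2 e y = 0 by linarith, show det2 y f = 0 by linarith, zero_smul, zero_smul,
      add_zero] at this
    exact (smul_eq_zero.1 this).resolve_left hef.ne'
  have hid : det2 x z * (det2 e y + det2 y f) =
      det2 x y * (det2 e z + det2 z f) + det2 y z * (det2 e x + det2 x f) := by
    simp only [det2]; ring
  have : 0 ≤ det2 x z * (det2 e y + det2 y f) := by
    rw [hid]; exact add_nonneg (mul_nonneg hxy (by linarith)) (mul_nonneg hyz (by linarith))
  exact nonneg_of_mul_nonneg_left this hly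

end det2

section Measure

lemma Submodule.span_singleton_ne_top_prod (u : ℝ × ℝ) : Submodule.span ℝ {u} ≠ ⊤ := by
  intro h
  have h1 := finrank_span_le_card (R := ℝ) ({u} : Set (ℝ × ℝ))
  rw [h, finrank_top, Module.finrank_prod, Module.finrank_self] at h1
  simp at h1

lemma mem_span_singleton_of_det2_eq_zero {u x : ℝ × ℝ} (hu : u ≠ 0) (h : det2 u x = 0) :
    x ∈ Submodule.span ℝ {u} := by
  have hD : 0 < det2 u (-u.2, u.1) := by
    have : u.1 ≠ 0 ∨ u.2 ≠ 0 := by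
      by_contra! h0; exact hu (Prod.ext h0.1 h0.2)
    simp only [det2]
    rcases this with h0 | h0 <;>
      nlinarith [mul_self_pos.2 h0, mul_self_nonneg u.1, mul_self_nonneg u.2]
  have hx : x = (det2 x (-u.2, u.1) / det2 u (-u.2, u.1)) • u := by
    have := det2_smul_eq u (-u.2, u.1) x
    rw [h, zero_smul, add_zero] at this
    rw [div_eq_inv_mul, mul_smul, ← this, inv_smul_smul₀ hD.ne']
  exact hx ▸ Submodule.smul_mem _ _ (Submodule.mem_span_singleton_self u)

lemma volume_setOf_det2_eq_zero {u : ℝ × ℝ} (hu : u ≠ 0) :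
    volume {x : ℝ × ℝ | det2 u x = 0} = 0 :=
  measure_mono_null (fun _ hx => mem_span_singleton_of_det2_eq_zero hu hx)
    (Measure.addHaar_submodule volume _ (Submodule.span_singleton_ne_top_prod u))

lemma mem_convexHull_of_det2_nonneg {u v z : ℝ × ℝ} (huv : 0 < det2 u v)
    (hu : 0 ≤ det2 u z) (hv : 0 ≤ det2 z v) (hw : 0 ≤ det2 (v - u) (z - u)) :
    z ∈ convexHull ℝ {0, u, v} := by
  set s := det2 z v / det2 u v
  set t := det2 u z / det2 u v
  have hz : z = s • u + t • v := by
    simp only [s, t, div_eq_inv_mul, mul_smul, ← smul_add, ← det2_smul_eq,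
      inv_smul_smul₀ huv.ne']
  have hst : s + t ≤ 1 := by
    rw [← add_div, div_le_one huv]
    simp only [det2, Prod.fst_sub, Prod.snd_sub] at hw ⊢
    linarith
  have hmem := (convex_convexHull ℝ ({0, u, v} : Set (ℝ × ℝ))).sum_mem (t := univ)
    (w := ![1 - s - t, s, t]) (z := ![0, u, v])
    (by
      simp only [mem_univ, Fin.forall_fin_succ]
      exact ⟨by simp; linarith, by simp; positivity, by simp; positivity, by simp⟩)
    (by simp [Fin.sum_univ_three]; ring)
    (fun i _ => subset_convexHull ℝ _ (by fin_cases i <;> simp))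
  simpa [Fin.sum_univ_three, ← hz] using hmem

lemma volume_unitTriangle :
    volume (convexHull ℝ {(0 : ℝ × ℝ), (1, 0), (0, 1)}) = ENNReal.ofReal (1 / 2) := by
  set S : Set (ℝ × ℝ) := {p | p.1 ∈ Set.Icc 0 1 ∧ p.2 ∈ Set.Icc 0 (1 - p.1)}
  have hS : convexHull ℝ {(0 : ℝ × ℝ), (1, 0), (0, 1)} = S := by
    refine subset_antisymm (convexHull_min ?_ ?_) fun p ⟨⟨hp1, _⟩, hp2, hp3⟩ =>
      mem_convexHull_of_det2_nonneg (by simp [det2]) (by simpa [det2] using hp2)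
        (by simpa [det2] using hp1) (by simp [det2]; linarith)
    · rintro p (rfl | rfl | rfl) <;> norm_num [S]
    · intro p ⟨⟨hp1, _⟩, hp2, hp3⟩ q ⟨⟨hq1, _⟩, hq2, hq3⟩ a b ha hb hab
      simp only [S, Set.mem_Icc, Set.mem_ofPred_eq, Prod.fst_add, Prod.snd_add, Prod.smul_fst,
        Prod.smul_snd, smul_eq_mul] at *
      refine ⟨⟨by positivity, ?_⟩, by positivity, ?_⟩ <;> nlinarith
  have hSm : MeasurableSet S := measurableSet_region_between_cc measurable_const
    (measurable_const.sub measurable_id) measurableSet_Icc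
  have hslice : ∀ x : ℝ, volume (Prod.mk x ⁻¹' S) =
      (Set.Icc 0 1).indicator (fun x => ENNReal.ofReal (1 - x)) x := by
    intro x
    by_cases hx : x ∈ Set.Icc (0 : ℝ) 1
    · have : Prod.mk x ⁻¹' S = Set.Icc 0 (1 - x) := by ext y; simp [S, hx.1, hx.2]
      simp [this, hx]
    · have : Prod.mk x ⁻¹' S = ∅ := by
        ext y
        simp only [S, Set.mem_preimage, Set.mem_ofPred_eq, Set.mem_empty_iff_false, iff_false]
        exact fun h => hx h.1
      simp [this, hx]
  rw [hS, Measure.volume_eq_prod, Measure.prod_apply hSm, lintegral_congr hslice,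
    lintegral_indicator measurableSet_Icc,
    ← ofReal_integral_eq_lintegral_ofReal (f := fun x => 1 - x)
      (by fun_prop : Continuous fun x : ℝ => 1 - x).integrableOn_Icc
      ((ae_restrict_iff' measurableSet_Icc).2 (.of_forall fun x hx => sub_nonneg.2 hx.2)),
    integral_Icc_eq_integral_Ioc, ← intervalIntegral.integral_of_le zero_le_one,
    intervalIntegral.integral_sub intervalIntegrable_const intervalIntegral.intervalIntegrable_id]
  norm_num

lemma volume_convexHull_triangle (u v : ℝ × ℝ) :
    volume (convexHull ℝ {0, u, v}) = ENNReal.ofReal (|det2 u v| / 2) := by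
  let f := Matrix.toLin (Module.Basis.finTwoProd ℝ) (Module.Basis.finTwoProd ℝ)
    !![u.1, v.1; u.2, v.2]
  have hf : ∀ x, f x = x.1 • u + x.2 • v := fun x => by simp [f, Prod.ext_iff, mul_comm]
  have himage : f '' convexHull ℝ {0, (1, 0), (0, 1)} = convexHull ℝ {0, u, v} := by
    rw [LinearMap.image_convexHull, Set.image_insert_eq, Set.image_insert_eq, Set.image_singleton]
    simp [hf]
  have hdet : LinearMap.det f = det2 u v := by
    rw [← LinearMap.det_toMatrix (Module.Basis.finTwoProd ℝ), LinearMap.toMatrix_toLin,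
      Matrix.det_fin_two, det2]
    simp
  rw [← himage, Measure.addHaar_image_linearMap, hdet, volume_unitTriangle,
    ← ENNReal.ofReal_mul (abs_nonneg _)]
  ring_nf

end Measure

section Cone

lemma mem_posCone_iff_det2 {u v : ℝ × ℝ} (hD : det2 u v ≠ 0) (x : ℝ × ℝ) :
    x ∈ posCone u v ↔ 0 ≤ det2 x v * det2 u v ∧ 0 ≤ det2 u x * det2 u v := by
  constructor
  · rintro ⟨s, t, hs, ht, rfl⟩
    simp only [det2_add_left, det2_add_right, det2_smul_left, det2_smul_right, det2_self,
      mul_zero, add_zero, zero_add]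
    constructor <;> nlinarith [mul_self_nonneg (det2 u v)]
  · rintro ⟨h1, h2⟩
    refine ⟨det2 x v / det2 u v, det2 u x / det2 u v, ?_, ?_, ?_⟩
    · simpa [mul_div_mul_right _ _ hD] using div_nonneg h1 (mul_self_nonneg (det2 u v))
    · simpa [mul_div_mul_right _ _ hD] using div_nonneg h2 (mul_self_nonneg (det2 u v))
    · rw [div_eq_inv_mul, div_eq_inv_mul, mul_smul, mul_smul, ← smul_add, ← det2_smul_eq,
        inv_smul_smul₀ hD]

lemma isClosed_posCone {u v : ℝ × ℝ} (hD : det2 u v ≠ 0) : IsClosed (posCone u v) := by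
  rw [show posCone u v = {x | 0 ≤ det2 x v * det2 u v} ∩ {x | 0 ≤ det2 u x * det2 u v} from
    Set.ext (mem_posCone_iff_det2 hD)]
  exact (isClosed_le continuous_const (by unfold det2; fun_prop)).inter
    (isClosed_le continuous_const (by unfold det2; fun_prop))

lemma det2_mul_pos_of_mem_posCone {u v x : ℝ × ℝ} (hD : det2 u v ≠ 0) (hx : x ∈ posCone u v)
    (hu : x ∉ rayThru u) (hv : x ∉ rayThru v) :
    0 < det2 x v * det2 u v ∧ 0 < det2 u x * det2 u v := by
  obtain ⟨s, t, hs, ht, rfl⟩ := hx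
  have hs0 : s ≠ 0 := by rintro rfl; exact hv ⟨t, ht, by simp⟩
  have ht0 : t ≠ 0 := by rintro rfl; exact hu ⟨s, hs, by simp⟩
  simp only [det2_add_left, det2_add_right, det2_smul_left, det2_smul_right, det2_self,
    mul_zero, add_zero, zero_add, mul_assoc]
  exact ⟨mul_pos (hs.lt_of_ne' hs0) (mul_self_pos.2 hD),
    mul_pos (ht.lt_of_ne' ht0) (mul_self_pos.2 hD)⟩

lemma closure_subset_posCone_iff {u v x : ℝ × ℝ} {K : Set (ℝ × ℝ)} (hD : det2 u v ≠ 0)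
    (hK : IsPreconnected K) (hxK : x ∈ K) (hu : Disjoint K (rayThru u))
    (hv : Disjoint K (rayThru v)) : closure K ⊆ posCone u v ↔ x ∈ posCone u v := by
  refine ⟨fun hsub => hsub (subset_closure hxK), fun hx => ?_⟩
  -- `K` avoids the boundary rays, so it lies either in the open cone `O` or outside the cone
  set O := {y | 0 < det2 y v * det2 u v} ∩ {y | 0 < det2 u y * det2 u v}
  have hO : O ⊆ posCone u v := fun y hy => (mem_posCone_iff_det2 hD y).2 ⟨hy.1.le, hy.2.le⟩
  have hstrict : ∀ y ∈ K, y ∈ posCone u v → y ∈ O := fun y hy hyc =>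
    det2_mul_pos_of_mem_posCone hD hyc (Set.disjoint_left.1 hu hy) (Set.disjoint_left.1 hv hy)
  have hKO : K ⊆ O := hK.subset_left_of_subset_union
    ((isOpen_lt continuous_const (by unfold det2; fun_prop)).inter
      (isOpen_lt continuous_const (by unfold det2; fun_prop)))
    (isClosed_posCone hD).isOpen_compl (Set.disjoint_compl_right_iff_subset.2 hO)
    (fun y hy => (em (y ∈ posCone u v)).imp (hstrict y hy) id) ⟨x, hxK, hstrict x hxK hx⟩
  exact (closure_mono (hKO.trans hO)).trans (isClosed_posCone hD).closure_eq.subset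

lemma LCsum_closure_connectedComponentIn {N : ℕ} (b : Fin N → ℝ × ℝ) {x : ℝ × ℝ}
    (hx : x ∈ (⋃ i, rayThru (b i))ᶜ) :
    LCsum b (closure (connectedComponentIn (⋃ i, rayThru (b i))ᶜ x)) =
      ∑ i, ∑ j, if i < j ∧ x ∈ posCone (b i) (b j) then |det2 (b i) (b j)| else 0 := by
  have hdisj : ∀ k, Disjoint (connectedComponentIn (⋃ i, rayThru (b i))ᶜ x) (rayThru (b k)) :=
    fun k => Set.disjoint_left.2 fun y hy hyk =>
      connectedComponentIn_subset _ _ hy (Set.mem_iUnion.2 ⟨k, hyk⟩)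
  refine sum_congr rfl fun i _ => sum_congr rfl fun j _ => ?_
  by_cases hd : det2 (b i) (b j) = 0
  · simp [hd]
  · rw [closure_subset_posCone_iff hd isPreconnected_connectedComponentIn
      (mem_connectedComponentIn hx) (hdisj i) (hdisj j)]

lemma mem_rayThru_of_polar {ρ r a b : ℝ} (hρ : 0 < ρ) (hr : 0 < r) (hcos : cos a = cos b)
    (hsin : sin a = sin b) : (ρ * cos a, ρ * sin a) ∈ rayThru (r * cos b, r * sin b) := by
  refine ⟨ρ / r, by positivity, ?_⟩
  simp only [Prod.smul_mk, smul_eq_mul, hcos, hsin]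
  congr 1 <;> field_simp

lemma exists_polar_mem_Ioc (x : ℝ × ℝ) (hx : x ≠ 0) (a : ℝ) :
    ∃ ρ φ : ℝ, 0 < ρ ∧ x = (ρ * cos φ, ρ * sin φ) ∧ a < φ ∧ φ ≤ a + 2 * π := by
  let z : ℂ := ⟨x.1, x.2⟩
  have hz : z ≠ 0 := fun h => hx (Prod.ext (congrArg Complex.re h) (congrArg Complex.im h))
  refine ⟨‖z‖, toIocMod two_pi_pos a z.arg, norm_pos_iff.2 hz, ?_, toIocMod_mem_Ioc _ _ _⟩
  rw [← self_sub_toIocDiv_zsmul, zsmul_eq_mul, cos_sub_int_mul_two_pi, sin_sub_int_mul_two_pi,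
    Complex.norm_mul_cos_arg, Complex.norm_mul_sin_arg]

lemma sin_neg_of_pi_lt_of_lt_two_pi {x : ℝ} (h1 : π < x) (h2 : x < 2 * π) : sin x < 0 := by
  rw [← sin_sub_two_pi]; exact sin_neg_of_neg_of_neg_pi_lt (by linarith) (by linarith)

lemma sin_nonpos_and_sin_nonpos_iff {a b c : ℝ} (hπ : π < b - a) (hba : b < a + 2 * π)
    (hbc : b - 2 * π < c) (hca : c < a + 2 * π) (hac : c ≠ a) (hcb : c ≠ b) :
    (sin (b - c) ≤ 0 ∧ sin (c - a) ≤ 0) ↔ ¬(a < c ∧ c < b) := by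
  constructor
  · rintro ⟨h1, h2⟩ ⟨h3, h4⟩
    rcases lt_or_ge (c - a) π with h5 | h5
    · exact (sin_pos_of_pos_of_lt_pi (by linarith) h5).not_ge h2
    · exact (sin_pos_of_pos_of_lt_pi (by linarith) (by linarith)).not_ge h1
  · intro hn
    rcases hac.lt_or_gt with h | h
    · exact ⟨(sin_neg_of_pi_lt_of_lt_two_pi (by linarith) (by linarith)).le,
        (sin_neg_of_neg_of_neg_pi_lt (by linarith) (by linarith)).le⟩
    · have h' : b < c := hcb.symm.lt_of_le (not_lt.1 fun h' => hn ⟨h, h'⟩)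
      exact ⟨(sin_neg_of_neg_of_neg_pi_lt (by linarith) (by linarith)).le,
        (sin_neg_of_pi_lt_of_lt_two_pi (by linarith) (by linarith)).le⟩

lemma sin_nonneg_and_sin_nonneg_iff {a b c : ℝ} (h0 : 0 < b - a) (hπ : b - a < π)
    (hbc : b - 2 * π < c) (hca : c < a + 2 * π) (hac : c ≠ a) (hcb : c ≠ b) :
    (0 ≤ sin (b - c) ∧ 0 ≤ sin (c - a)) ↔ (a < c ∧ c < b) := by
  constructor
  · rintro ⟨h1, h2⟩
    refine ⟨hac.symm.lt_of_le (not_lt.1 fun h => ?_), hcb.lt_of_le (not_lt.1 fun h => ?_)⟩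
    · rcases lt_or_ge (-π) (c - a) with h5 | h5
      · exact (sin_neg_of_neg_of_neg_pi_lt (by linarith) h5).not_ge h2
      · exact (sin_neg_of_pi_lt_of_lt_two_pi (by linarith) (by linarith)).not_ge h1
    · rcases lt_or_ge (-π) (b - c) with h5 | h5
      · exact (sin_neg_of_neg_of_neg_pi_lt (by linarith) h5).not_ge h1
      · exact (sin_neg_of_pi_lt_of_lt_two_pi (by linarith) (by linarith)).not_ge h2
  · rintro ⟨h1, h2⟩
    exact ⟨(sin_pos_of_pos_of_lt_pi (by linarith) (by linarith)).le,
      (sin_pos_of_pos_of_lt_pi (by linarith) (by linarith)).le⟩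

/-- `mem_posCone_iff_det2` in polar coordinates: for directions `a ≤ b < a + 2π` and `c`, the
direction `c` lies in the cone spanned by `a` and `b` iff "`c` is between `a` and `b`" agrees
with "`b - a < π`". -/
lemma sin_mul_sin_nonneg_iff {a b c : ℝ} (hab : a ≤ b) (hba : b < a + 2 * π)
    (hbc : b - 2 * π < c) (hca : c < a + 2 * π) (hac : c ≠ a) (hcb : c ≠ b)
    (hs : sin (b - a) ≠ 0) :
    (0 ≤ sin (b - c) * sin (b - a) ∧ 0 ≤ sin (c - a) * sin (b - a)) ↔
      ((a < c ∧ c < b) ↔ 0 < sin (b - a)) := by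
  rcases hs.lt_or_gt with hneg | hpos
  · have hπ : π < b - a := by
      by_contra! hle
      exact (sin_nonneg_of_nonneg_of_le_pi (by linarith) hle).not_gt hneg
    have hmul : ∀ y, 0 ≤ y * sin (b - a) ↔ y ≤ 0 := fun y => by
      constructor <;> intro <;> nlinarith
    simp only [hmul, hneg.not_gt, iff_false]
    exact sin_nonpos_and_sin_nonpos_iff hπ hba hbc hca hac hcb
  · have hπ : b - a < π := by
      by_contra! hle
      rcases hle.lt_or_eq with hlt | heq
      · exact (sin_neg_of_pi_lt_of_lt_two_pi hlt (by linarith)).not_gt hpos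
      · simp [← heq] at hpos
    have h0 : 0 < b - a := by
      rcases (sub_nonneg.2 hab).lt_or_eq with h | h
      · exact h
      · simp [← h] at hpos
    simp only [mul_nonneg_iff_of_pos_right hpos, hpos, iff_true]
    exact sin_nonneg_and_sin_nonneg_iff h0 hπ hbc hca hac hcb

lemma ite_abs_eq_add_ite {P Q : Prop} [Decidable P] [Decidable Q] {d : ℝ}
    (h : d ≠ 0 → (P ↔ (Q ↔ 0 < d))) :
    (if P then |d| else 0) = (|d| - d) / 2 + if Q then d else 0 := by
  rcases lt_trichotomy d 0 with hd | rfl | hd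
  · have := h hd.ne
    by_cases hQ : Q <;> simp [hQ, this, hd.not_gt, abs_of_neg hd] <;> ring
  · simp
  · have := h hd.ne'
    by_cases hQ : Q <;> simp [hQ, this, hd, abs_of_pos hd]

end Cone

section Polygon

lemma sum_polar_ne_zero {ι : Type*} {s : Finset ι} (hs : s.Nonempty) {R θ : ι → ℝ} (μ : ℝ)
    (hR : ∀ i ∈ s, 0 < R i) (hθ : ∀ i ∈ s, |θ i - μ| < π / 2) :
    ∑ i ∈ s, (R i * cos (θ i), R i * sin (θ i)) ≠ 0 := by
  intro h
  -- the component along the direction `μ` is positive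
  have hμ := congrArg (fun x : ℝ × ℝ => x.1 * cos μ + x.2 * sin μ) h
  simp only [Prod.fst_sum, Prod.snd_sum, Prod.fst_zero, Prod.snd_zero, sum_mul,
    ← sum_add_distrib, zero_mul, add_zero] at hμ
  have hpos : 0 < ∑ i ∈ s, (R i * cos (θ i) * cos μ + R i * sin (θ i) * sin μ) := by
    refine sum_pos (fun i hi => ?_) hs
    have := abs_lt.1 (hθ i hi)
    rw [mul_assoc, mul_assoc, ← mul_add, ← cos_sub]
    exact mul_pos (hR i hi) (cos_pos_of_mem_Ioo ⟨by linarith, by linarith⟩)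
  exact hpos.ne' hμ

lemma sum_nonneg_of_sum_eq_zero {ι : Type*} [DecidableEq ι] {s t : Finset ι} {f ψ : ι → ℝ}
    {c : ℝ} (hts : t ⊆ s) (hs : ∑ i ∈ s, f i = 0) (hψ : ∀ i ∈ t, ∀ j ∈ s \ t, ψ i ≤ ψ j)
    (hpos : ∀ i ∈ s, ψ i ≤ c → 0 ≤ f i) (hneg : ∀ i ∈ s, c < ψ i → f i ≤ 0) :
    0 ≤ ∑ i ∈ t, f i := by
  by_cases h : ∀ i ∈ t, ψ i ≤ c
  · exact sum_nonneg fun i hi => hpos i (hts hi) (h i hi)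
  · simp only [not_forall, not_le] at h
    obtain ⟨i, hi, hci⟩ := h
    have hrest : ∑ j ∈ s \ t, f j ≤ 0 := sum_nonpos fun j hj =>
      hneg j (sdiff_subset hj) (hci.trans_le (hψ i hi j hj))
    linarith [sum_sdiff hts (f := f)]

lemma exists_pos_nonpos_succ {f : ℕ → ℝ} {a b : ℕ} (hab : a ≤ b) (ha : 0 < f a)
    (hb : f b ≤ 0) : ∃ j, a ≤ j ∧ j < b ∧ 0 < f j ∧ f (j + 1) ≤ 0 := by
  induction b, hab using Nat.le_induction with
  | base => exact absurd hb ha.not_ge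
  | succ b hab ih =>
    by_cases hfb : f b ≤ 0
    · obtain ⟨j, h1, h2, h3⟩ := ih hfb
      exact ⟨j, h1, by omega, h3⟩
    · exact ⟨b, hab, by omega, not_le.1 hfb, hb⟩

/-- The condition `CCW` on the first `N` terms of an `ℕ`-indexed family; indexing by `ℕ` makes
the vertices of `Δ` sums over `range`. -/
structure IsCCWPolar (N : ℕ) (B : ℕ → ℝ × ℝ) (θ R : ℕ → ℝ) : Prop where
  eq_polar : ∀ i < N, B i = (R i * cos (θ i), R i * sin (θ i))
  pos : ∀ i < N, 0 < R i
  mono : ∀ i j, i ≤ j → j < N → θ i ≤ θ j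
  lt_add_two_pi : ∀ i j, i < N → j < N → θ i < θ j + 2 * π

def partialSum (B : ℕ → ℝ × ℝ) (m : ℕ) : ℝ × ℝ := ∑ i ∈ range m, B i

def polygon (N : ℕ) (B : ℕ → ℝ × ℝ) : Set (ℝ × ℝ) :=
  convexHull ℝ (Set.range fun k : Fin N => partialSum B (k + 1))

def fanTriangle (B : ℕ → ℝ × ℝ) (k : ℕ) : Set (ℝ × ℝ) :=
  convexHull ℝ {0, partialSum B k, partialSum B (k + 1)}

/-- The counterclockwise angle from `B k` to `B i`. -/
def cyclicAngle (θ : ℕ → ℝ) (k i : ℕ) : ℝ := θ i - θ k + if i < k then 2 * π else 0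

@[simp] lemma partialSum_zero (B : ℕ → ℝ × ℝ) : partialSum B 0 = 0 := by simp [partialSum]

lemma partialSum_succ (B : ℕ → ℝ × ℝ) (m : ℕ) : partialSum B (m + 1) = partialSum B m + B m :=
  sum_range_succ _ _

lemma det2_partialSum_succ (B : ℕ → ℝ × ℝ) (k : ℕ) :
    det2 (partialSum B k) (partialSum B (k + 1)) = ∑ i ∈ range k, det2 (B i) (B k) := by
  rw [partialSum_succ, det2_add_right, det2_self, zero_add, partialSum, det2_sum_left]

variable {N : ℕ} {B : ℕ → ℝ × ℝ} {θ R : ℕ → ℝ}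

lemma sum_det2_eq_zero (hzero : partialSum B N = 0) (u : ℝ × ℝ) :
    ∑ i ∈ range N, det2 u (B i) = 0 := by
  rw [← det2_sum_right, ← partialSum, hzero, det2_zero_right]

lemma partialSum_mem_polygon (hzero : partialSum B N = 0) (hN : 0 < N) {m : ℕ} (hm : m ≤ N) :
    partialSum B m ∈ polygon N B := by
  rcases Nat.eq_zero_or_pos m with rfl | hm0
  · rw [partialSum_zero, ← hzero]
    exact subset_convexHull ℝ _ ⟨⟨N - 1, by omega⟩, by simp [Nat.sub_add_cancel hN]⟩
  · exact subset_convexHull ℝ _ ⟨⟨m - 1, by omega⟩, by simp [Nat.sub_add_cancel hm0]⟩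

lemma fanTriangle_subset_polygon (hzero : partialSum B N = 0) {k : ℕ} (hk : k < N) :
    fanTriangle B k ⊆ polygon N B := by
  refine convexHull_min ?_ (convex_convexHull ℝ _)
  rintro _ (rfl | rfl | rfl)
  · simpa using partialSum_mem_polygon hzero (by omega) (Nat.zero_le _)
  · exact partialSum_mem_polygon hzero (by omega) hk.le
  · exact partialSum_mem_polygon hzero (by omega) hk

lemma exists_mem_fanTriangle (hN : 0 < N) (hzero : partialSum B N = 0) {z : ℝ × ℝ}
    (hz : ∀ k < N, det2 (B k) (partialSum B k) ≤ det2 (B k) z)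
    (hz0 : 0 < det2 (B 0) z) : ∃ j < N, z ∈ fanTriangle B j := by
  obtain ⟨j, -, hjN, hj, hj1⟩ := exists_pos_nonpos_succ (f := fun m => det2 (partialSum B m) z)
    hN (by simpa [partialSum] using hz0) (by simp [hzero])
  have hedge : 0 ≤ det2 (partialSum B (j + 1) - partialSum B j) (z - partialSum B j) := by
    rw [partialSum_succ, add_sub_cancel_left, det2_sub_right]
    linarith [hz j hjN]
  have hid : det2 (partialSum B (j + 1) - partialSum B j) (z - partialSum B j) =
      det2 (partialSum B (j + 1)) z + det2 (partialSum B j) (partialSum B (j + 1)) -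
        det2 (partialSum B j) z := by
    simp only [det2, Prod.fst_sub, Prod.snd_sub]; ring
  refine ⟨j, hjN, mem_convexHull_of_det2_nonneg ?_ hj.le ?_ hedge⟩
  · linarith
  · rw [det2_anticomm]; linarith

namespace IsCCWPolar

lemma det2_eq (h : IsCCWPolar N B θ R) {i j : ℕ} (hi : i < N) (hj : j < N) :
    det2 (B i) (B j) = R i * R j * sin (θ j - θ i) := by
  rw [h.eq_polar i hi, h.eq_polar j hj, det2_polar]

lemma ne_zero (h : IsCCWPolar N B θ R) {i : ℕ} (hi : i < N) : B i ≠ 0 := by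
  intro h0
  have hc := congrArg Prod.fst ((h.eq_polar i hi).symm.trans h0)
  have hs := congrArg Prod.snd ((h.eq_polar i hi).symm.trans h0)
  simp only [Prod.fst_zero, Prod.snd_zero, mul_eq_zero, (h.pos i hi).ne', false_or] at hc hs
  simpa [hc, hs] using sin_sq_add_cos_sq (θ i)

lemma sum_eq_polar (h : IsCCWPolar N B θ R) {s : Finset ℕ} (hs : ∀ i ∈ s, i < N) :
    ∑ i ∈ s, B i = ∑ i ∈ s, (R i * cos (θ i), R i * sin (θ i)) :=
  sum_congr rfl fun i hi => h.eq_polar i (hs i hi)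

lemma cyclicAngle_mem_Icc (h : IsCCWPolar N B θ R) {k i : ℕ} (hk : k < N) (hi : i < N) :
    cyclicAngle θ k i ∈ Set.Icc 0 (2 * π) := by
  have := h.lt_add_two_pi k i hk hi
  have := h.lt_add_two_pi i k hi hk
  by_cases hik : i < k
  · have := h.mono i k hik.le hk
    simp only [cyclicAngle, if_pos hik, Set.mem_Icc]
    constructor <;> linarith
  · have := h.mono k i (not_lt.1 hik) hi
    simp only [cyclicAngle, if_neg hik, add_zero, Set.mem_Icc]
    constructor <;> linarith

lemma det2_eq_sin_cyclicAngle (h : IsCCWPolar N B θ R) {k i : ℕ} (hk : k < N) (hi : i < N) :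
    det2 (B k) (B i) = R k * R i * sin (cyclicAngle θ k i) := by
  rw [h.det2_eq hk hi, cyclicAngle]
  split_ifs <;> simp [sin_add_two_pi]

lemma cyclicAngle_le (h : IsCCWPolar N B θ R) {k i j : ℕ} (hi : i < N) (hj : j < N)
    (hij : k ≤ i ∧ i ≤ j ∨ i ≤ j ∧ j < k ∨ j < k ∧ k ≤ i) :
    cyclicAngle θ k i ≤ cyclicAngle θ k j := by
  rcases hij with ⟨hki, hij⟩ | ⟨hij, hjk⟩ | ⟨hjk, hki⟩
  · simp only [cyclicAngle, if_neg (not_lt.2 hki), if_neg (not_lt.2 (hki.trans hij))]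
    linarith [h.mono i j hij hj]
  · simp only [cyclicAngle, if_pos (lt_of_le_of_lt hij hjk), if_pos hjk]
    linarith [h.mono i j hij hj]
  · simp only [cyclicAngle, if_neg (not_lt.2 hki), if_pos hjk]
    linarith [h.lt_add_two_pi i j hi hj]

/-- Along the cyclic order starting at `k`, the terms `det2 (B k) (B i)` are first nonnegative,
then nonpositive, and they sum to `0`. -/
lemma sum_det2_nonneg (h : IsCCWPolar N B θ R) (hzero : partialSum B N = 0) {k : ℕ}
    (hk : k < N) {t : Finset ℕ} (hts : t ⊆ range N)
    (ht : ∀ i ∈ t, ∀ j ∈ range N \ t, cyclicAngle θ k i ≤ cyclicAngle θ k j) :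
    0 ≤ ∑ i ∈ t, det2 (B k) (B i) := by
  refine sum_nonneg_of_sum_eq_zero hts (sum_det2_eq_zero hzero _) ht (c := π)
    (fun i hi hle => ?_) (fun i hi hlt => ?_)
  · have hi := mem_range.1 hi
    rw [h.det2_eq_sin_cyclicAngle hk hi]
    exact mul_nonneg (mul_pos (h.pos k hk) (h.pos i hi)).le
      (sin_nonneg_of_nonneg_of_le_pi (h.cyclicAngle_mem_Icc hk hi).1 hle)
  · have hi := mem_range.1 hi
    rw [h.det2_eq_sin_cyclicAngle hk hi, ← sin_sub_two_pi]
    exact mul_nonpos_of_nonneg_of_nonpos (mul_pos (h.pos k hk) (h.pos i hi)).le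
      (sin_nonpos_of_nonpos_of_neg_pi_le (by linarith [(h.cyclicAngle_mem_Icc hk hi).2])
        (by linarith))

lemma det2_partialSum_le (h : IsCCWPolar N B θ R) (hzero : partialSum B N = 0) {k m : ℕ}
    (hk : k < N) (hm : m ≤ N) :
    det2 (B k) (partialSum B k) ≤ det2 (B k) (partialSum B m) := by
  simp only [partialSum, det2_sum_right]
  rcases le_or_gt k m with hkm | hmk
  · have := h.sum_det2_nonneg hzero hk (t := Ico k m)
      (fun i hi => mem_range.2 (by simp at hi; omega)) fun i hi j hj => by
        simp only [mem_Ico, mem_sdiff, mem_range] at hi hj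
        exact h.cyclicAngle_le (by omega) hj.1 (by omega)
    rw [sum_Ico_eq_sub _ hkm] at this
    linarith
  · have hsub : Ico m k ⊆ range N := fun i hi => mem_range.2 (by simp at hi; omega)
    have := h.sum_det2_nonneg hzero hk (t := range N \ Ico m k) sdiff_subset fun i hi j hj => by
      simp only [mem_Ico, mem_sdiff, mem_range, sdiff_sdiff_right_self, inf_eq_inter,
        inter_eq_right.2 hsub] at hi hj
      exact h.cyclicAngle_le hi.1 (by omega) (by omega)
    rw [sum_sdiff_eq_sub hsub, sum_det2_eq_zero hzero, sum_Ico_eq_sub _ hmk.le] at this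
    linarith

lemma partialSum_ne_zero (h : IsCCWPolar N B θ R) (hzero : partialSum B N = 0) {c : ℕ}
    (hc0 : 0 < c) (hcN : c < N) : partialSum B c ≠ 0 := by
  intro h0
  have hrest : ∑ i ∈ Ico c N, B i = 0 := by
    have := sum_range_add_sum_Ico B hcN.le
    rwa [← partialSum, ← partialSum, h0, hzero, zero_add] at this
  -- one of the blocks `[0, c)` and `[c, N)` has angular spread `< π`
  rcases lt_or_ge (θ (c - 1) - θ 0) π with hlt | hge
  · refine sum_polar_ne_zero (s := range c) ⟨0, mem_range.2 hc0⟩ ((θ 0 + θ (c - 1)) / 2)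
      (fun i hi => h.pos i (by simp at hi; omega)) (fun i hi => ?_)
      ((h.sum_eq_polar fun i hi => by simp at hi; omega).symm.trans h0)
    have := h.mono 0 i (Nat.zero_le _) (by simp at hi; omega)
    have := h.mono i (c - 1) (by simp at hi; omega) (by omega)
    rw [abs_lt]; constructor <;> linarith
  · refine sum_polar_ne_zero (s := Ico c N) ⟨c, by simp [hcN]⟩ ((θ c + θ (N - 1)) / 2)
      (fun i hi => h.pos i (by simp at hi; omega)) (fun i hi => ?_)
      ((h.sum_eq_polar fun i hi => by simp at hi; omega).symm.trans hrest)
    have := h.mono c i (by simp at hi; omega) (by simp at hi; omega)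
    have := h.mono i (N - 1) (by simp at hi; omega) (by omega)
    have := h.mono (c - 1) c (by omega) hcN
    have := h.lt_add_two_pi (N - 1) 0 (by omega) (by omega)
    rw [abs_lt]; constructor <;> linarith

lemma pi_lt_spread (h : IsCCWPolar N B θ R) (hzero : partialSum B N = 0)
    (hspan : Submodule.span ℝ (Set.range fun i : Fin N => B i) = ⊤) : π < θ (N - 1) - θ 0 := by
  have hN : 0 < N := by
    rcases Nat.eq_zero_or_pos N with rfl | hN
    · simp [Set.range_eq_empty] at hspan
    · exact hN
  by_contra! hle
  -- otherwise the `det2 (B 0) (B i)` are nonnegative with sum `0`, so all `B i` are collinear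
  have hnn : ∀ i ∈ range N, 0 ≤ det2 (B 0) (B i) := fun i hi => by
    have hi := mem_range.1 hi
    rw [h.det2_eq hN hi]
    have := h.mono 0 i (Nat.zero_le _) hi
    have := h.mono i (N - 1) (by omega) (by omega)
    exact mul_nonneg (mul_pos (h.pos 0 hN) (h.pos i hi)).le
      (sin_nonneg_of_nonneg_of_le_pi (by linarith) (by linarith))
  have hsub : Set.range (fun i : Fin N => B i) ⊆ Submodule.span ℝ {B 0} := by
    rintro _ ⟨i, rfl⟩
    exact mem_span_singleton_of_det2_eq_zero (h.ne_zero hN)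
      ((sum_eq_zero_iff_of_nonneg hnn).1 (sum_det2_eq_zero hzero _) i (mem_range.2 i.isLt))
  exact Submodule.span_singleton_ne_top_prod (B 0)
    (top_le_iff.1 (hspan ▸ Submodule.span_le.2 hsub))

lemma det2_partialSum_succ_nonneg (h : IsCCWPolar N B θ R) (hzero : partialSum B N = 0)
    {k : ℕ} (hk : k < N) : 0 ≤ det2 (partialSum B k) (partialSum B (k + 1)) := by
  have := h.det2_partialSum_le hzero hk le_rfl
  rw [hzero, det2_zero_right, det2_anticomm] at this
  rw [partialSum_succ, det2_add_right, det2_self]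
  linarith

lemma det2_partialSum_nonneg (h : IsCCWPolar N B θ R) (hzero : partialSum B N = 0)
    (hgap : π < θ (N - 1) - θ 0) {a b : ℕ} (hab : a ≤ b) (hb : b ≤ N) :
    0 ≤ det2 (partialSum B a) (partialSum B b) := by
  have hN : 2 ≤ N := by
    by_contra! hN
    interval_cases N <;> simp at hgap <;> linarith [pi_pos]
  rcases Nat.eq_zero_or_pos a with rfl | ha
  · simp
  -- all vertices lie in the cone spanned by `B 0` and `-B (N - 1)`, of angle `< π`
  have hlast : partialSum B (N - 1) = -B (N - 1) := by
    rw [eq_neg_iff_add_eq_zero, ← partialSum_succ, Nat.sub_add_cancel (by omega), hzero]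
  have hcone : ∀ m ≤ N, 0 ≤ det2 (B 0) (partialSum B m) ∧
      0 ≤ det2 (partialSum B m) (-B (N - 1)) := fun m hm => by
    have h0 := h.det2_partialSum_le hzero (by omega : 0 < N) hm
    have h1 := h.det2_partialSum_le hzero (by omega : N - 1 < N) hm
    rw [partialSum_zero, det2_zero_right] at h0
    rw [hlast, det2_neg_right, det2_self, neg_zero] at h1
    rw [det2_neg_right, det2_anticomm (partialSum B m), neg_neg]
    exact ⟨h0, h1⟩
  have hef : 0 < det2 (B 0) (-B (N - 1)) := by
    rw [det2_neg_right, h.det2_eq (by omega) (by omega), neg_pos]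
    have := h.lt_add_two_pi (N - 1) 0 (by omega) (by omega)
    exact mul_neg_of_pos_of_neg (mul_pos (h.pos 0 (by omega)) (h.pos (N - 1) (by omega)))
      (sin_neg_of_pi_lt_of_lt_two_pi hgap (by linarith))
  induction b, hab using Nat.le_induction with
  | base => simp
  | succ b hab ih =>
    exact det2_nonneg_trans hef (hcone a (by omega)) (hcone b (by omega)) (hcone (b + 1) hb)
      (h.partialSum_ne_zero hzero (by omega) (by omega)) (ih (by omega))
      (h.det2_partialSum_succ_nonneg hzero (by omega))

lemma polygon_subset (h : IsCCWPolar N B θ R) (hzero : partialSum B N = 0) :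
    polygon N B ⊆ {z | ∀ k < N, det2 (B k) (partialSum B k) ≤ det2 (B k) z} := by
  refine convexHull_min ?_ fun x hx y hy a b ha hb hab k hk =>
    convex_setOf_le_det2 (B k) _ (hx k hk) (hy k hk) ha hb hab
  rintro _ ⟨m, rfl⟩ k hk
  exact h.det2_partialSum_le hzero hk m.isLt

lemma polygon_subset_union (h : IsCCWPolar N B θ R) (hzero : partialSum B N = 0)
    (hN : 0 < N) :
    polygon N B ⊆ (⋃ k ∈ range N, fanTriangle B k) ∪ {z | det2 (B 0) z = 0} := fun z hz => by
  have hedges := h.polygon_subset hzero hz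
  rcases (h.det2_partialSum_le hzero hN (Nat.zero_le _)).trans (hedges 0 hN) |>.lt_or_eq
    with hlt | heq
  · simp only [partialSum_zero, det2_zero_right] at hlt
    obtain ⟨j, hj, hzj⟩ := exists_mem_fanTriangle hN hzero hedges hlt
    exact Or.inl (Set.mem_biUnion (mem_range.2 hj) hzj)
  · simp only [partialSum_zero, det2_zero_right] at heq
    exact Or.inr heq.symm

lemma volume_fanTriangle_inter (h : IsCCWPolar N B θ R) (hzero : partialSum B N = 0)
    (hgap : π < θ (N - 1) - θ 0) {j k : ℕ} (hjk : j < k) (hk : k < N) :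
    volume (fanTriangle B j ∩ fanTriangle B k) = 0 := by
  -- the line through `0` and `partialSum B (j + 1)` separates the two triangles
  have hj : fanTriangle B j ⊆ {x | det2 (partialSum B (j + 1)) x ≤ 0} := by
    refine convexHull_min ?_ (convex_setOf_det2_le _ 0)
    rintro _ (rfl | rfl | rfl)
    · simp
    · simp only [Set.mem_ofPred_eq]
      rw [det2_anticomm, neg_nonpos]
      exact h.det2_partialSum_succ_nonneg hzero (by omega)
    · simp
  have hk' : fanTriangle B k ⊆ {x | 0 ≤ det2 (partialSum B (j + 1)) x} := by
    refine convexHull_min ?_ (convex_setOf_le_det2 _ 0)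
    rintro _ (rfl | rfl | rfl)
    · simp
    · exact h.det2_partialSum_nonneg hzero hgap hjk hk.le
    · exact h.det2_partialSum_nonneg hzero hgap (by omega) hk
  exact measure_mono_null (fun x hx => le_antisymm (hj hx.1) (hk' hx.2))
    (volume_setOf_det2_eq_zero (h.partialSum_ne_zero hzero (by omega) (by omega)))

lemma volume_polygon (h : IsCCWPolar N B θ R) (hzero : partialSum B N = 0)
    (hgap : π < θ (N - 1) - θ 0) :
    volume (polygon N B) = ENNReal.ofReal (∑ k ∈ range N, ∑ i ∈ range k, det2 (B i) (B k) / 2) := by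
  have hN : 0 < N := by
    rcases Nat.eq_zero_or_pos N with rfl | hN
    · simp at hgap; linarith [pi_pos]
    · exact hN
  have hdisj : (range N : Set ℕ).Pairwise (Function.onFun (AEDisjoint volume) (fanTriangle B)) := by
    intro j hj k hk hjk
    simp only [coe_range, Set.mem_Iio] at hj hk
    rcases hjk.lt_or_gt with hlt | hlt
    · exact h.volume_fanTriangle_inter hzero hgap hlt hk
    · exact (Set.inter_comm _ _ ▸ h.volume_fanTriangle_inter hzero hgap hlt hj :)
  have hvol : volume (polygon N B) = volume (⋃ k ∈ range N, fanTriangle B k) := by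
    refine le_antisymm ?_ (measure_mono (Set.iUnion₂_subset fun k hk =>
      fanTriangle_subset_polygon hzero (mem_range.1 hk)))
    calc volume (polygon N B)
        ≤ volume ((⋃ k ∈ range N, fanTriangle B k) ∪ {z | det2 (B 0) z = 0}) :=
          measure_mono (h.polygon_subset_union hzero hN)
      _ ≤ volume (⋃ k ∈ range N, fanTriangle B k) + volume {z | det2 (B 0) z = 0} :=
          measure_union_le _ _
      _ = volume (⋃ k ∈ range N, fanTriangle B k) := by
          rw [volume_setOf_det2_eq_zero (h.ne_zero hN), add_zero]
  rw [hvol, measure_biUnion_finset₀ hdisj fun k _ =>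
      ((Set.toFinite _).isCompact_convexHull (𝕜 := ℝ)).isClosed.measurableSet.nullMeasurableSet,
    ENNReal.ofReal_sum_of_nonneg fun k hk => by
      rw [← sum_div, ← det2_partialSum_succ]
      exact div_nonneg (h.det2_partialSum_succ_nonneg hzero (mem_range.1 hk)) zero_le_two]
  refine sum_congr rfl fun k hk => ?_
  rw [fanTriangle, volume_convexHull_triangle, ← sum_div, ← det2_partialSum_succ,
    abs_of_nonneg (h.det2_partialSum_succ_nonneg hzero (mem_range.1 hk))]

lemma exists_polar_of_notMem_rayThru (h : IsCCWPolar N B θ R) (hN : 0 < N) {x : ℝ × ℝ}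
    (hx : ∀ m < N, x ∉ rayThru (B m)) :
    ∃ ρ φ : ℝ, 0 < ρ ∧ x = (ρ * cos φ, ρ * sin φ) ∧ θ 0 < φ ∧ φ < θ 0 + 2 * π ∧
      ∀ m < N, θ m ≠ φ := by
  have hx0 : x ≠ 0 := by rintro rfl; exact hx 0 hN ⟨0, le_rfl, by simp⟩
  obtain ⟨ρ, φ, hρ, rfl, hφ0, hφ1⟩ := exists_polar_mem_Ioc x hx0 (θ 0)
  have hray : ∀ m < N, cos φ = cos (θ m) → sin φ = sin (θ m) → False := fun m hm hc hs =>
    hx m hm (h.eq_polar m hm ▸ mem_rayThru_of_polar hρ (h.pos m hm) hc hs)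
  refine ⟨ρ, φ, hρ, rfl, hφ0, hφ1.lt_of_ne fun he => ?_,
    fun m hm he => hray m hm (he ▸ rfl) (he ▸ rfl)⟩
  exact hray 0 hN (by rw [he, cos_add_two_pi]) (by rw [he, sin_add_two_pi])

lemma polar_mem_posCone_iff (h : IsCCWPolar N B θ R) {ρ φ : ℝ} (hρ : 0 < ρ) (hφ0 : θ 0 < φ)
    (hφ1 : φ < θ 0 + 2 * π) (hφ : ∀ m < N, θ m ≠ φ) {i j : ℕ} (hij : i < j) (hj : j < N)
    (hd : det2 (B i) (B j) ≠ 0) :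
    (ρ * cos φ, ρ * sin φ) ∈ posCone (B i) (B j) ↔
      ((θ i < φ ∧ φ < θ j) ↔ 0 < det2 (B i) (B j)) := by
  have hi : i < N := hij.trans hj
  have hRi := h.pos i hi
  have hRj := h.pos j hj
  rw [mem_posCone_iff_det2 hd, h.det2_eq hi hj, h.eq_polar i hi, h.eq_polar j hj, det2_polar,
    det2_polar]
  have e1 : ρ * R j * sin (θ j - φ) * (R i * R j * sin (θ j - θ i)) =
      ρ * R j * (R i * R j) * (sin (θ j - φ) * sin (θ j - θ i)) := by ring
  have e2 : R i * ρ * sin (φ - θ i) * (R i * R j * sin (θ j - θ i)) =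
      R i * ρ * (R i * R j) * (sin (φ - θ i) * sin (θ j - θ i)) := by ring
  rw [e1, e2, mul_nonneg_iff_of_pos_left (show 0 < ρ * R j * (R i * R j) by positivity),
    mul_nonneg_iff_of_pos_left (show 0 < R i * ρ * (R i * R j) by positivity),
    mul_pos_iff_of_pos_left (show 0 < R i * R j by positivity)]
  refine sin_mul_sin_nonneg_iff (h.mono i j hij.le hj) (h.lt_add_two_pi j i hj hi) ?_ ?_
    (hφ i hi).symm (hφ j hj).symm fun hs => hd (by rw [h.det2_eq hi hj, hs, mul_zero])
  · linarith [h.lt_add_two_pi j 0 hj (by omega)]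
  · linarith [h.mono 0 i (Nat.zero_le _) hi]

lemma sum_det2_cross_eq_zero (h : IsCCWPolar N B θ R) (hzero : partialSum B N = 0) {φ : ℝ}
    (hφ : ∀ m < N, θ m ≠ φ) :
    ∑ j ∈ range N, ∑ i ∈ range j,
      (if θ i < φ ∧ φ < θ j then det2 (B i) (B j) else 0) = 0 := by
  -- the sum is `det2 S (-S)` with `S` the sum of the `B i` with `θ i < φ`
  have hext : ∀ j ∈ range N, ∑ i ∈ range j, (if θ i < φ ∧ φ < θ j then det2 (B i) (B j) else 0) =
      ∑ i ∈ range N, (if θ i < φ ∧ φ < θ j then det2 (B i) (B j) else 0) := fun j hj =>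
    sum_subset (range_subset_range.2 (mem_range.1 hj).le) fun i hi hij => if_neg fun hθ => by
      have := h.mono j i (by simpa using hij) (mem_range.1 hi)
      linarith [hθ.1, hθ.2]
  have hsplit : ∑ j ∈ (range N).filter (fun j => φ < θ j), B j =
      -∑ i ∈ (range N).filter (fun i => θ i < φ), B i := by
    rw [eq_neg_iff_add_eq_zero, add_comm, ← hzero, partialSum]
    convert sum_filter_add_sum_filter_not (range N) (fun i => θ i < φ) B using 3
    refine filter_congr fun j hj => ?_
    exact ⟨fun h1 h2 => by linarith, fun h1 =>
      (not_lt.1 h1).lt_of_ne' (hφ j (mem_range.1 hj))⟩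
  rw [sum_congr rfl hext, sum_comm]
  simp only [ite_and, sum_ite_irrel, sum_const_zero, ← sum_filter, ← det2_sum_right]
  rw [← det2_sum_left, hsplit, det2_neg_right, det2_self, neg_zero]

lemma sum_ite_mem_posCone (h : IsCCWPolar N B θ R) (hzero : partialSum B N = 0) {x : ℝ × ℝ}
    (hx : ∀ m < N, x ∉ rayThru (B m)) :
    ∑ j ∈ range N, ∑ i ∈ range j,
      (if x ∈ posCone (B i) (B j) then |det2 (B i) (B j)| else 0) =
      ∑ j ∈ range N, ∑ i ∈ range j, (|det2 (B i) (B j)| - det2 (B i) (B j)) / 2 := by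
  rcases Nat.eq_zero_or_pos N with rfl | hN
  · simp
  obtain ⟨ρ, φ, hρ, rfl, hφ0, hφ1, hφ⟩ := h.exists_polar_of_notMem_rayThru hN hx
  calc _ = ∑ j ∈ range N, ∑ i ∈ range j, ((|det2 (B i) (B j)| - det2 (B i) (B j)) / 2 +
        if θ i < φ ∧ φ < θ j then det2 (B i) (B j) else 0) :=
        sum_congr rfl fun j hj => sum_congr rfl fun i hi => ite_abs_eq_add_ite fun hd =>
          h.polar_mem_posCone_iff hρ hφ0 hφ1 hφ (mem_range.1 hi) (mem_range.1 hj) hd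
    _ = _ := by simp only [sum_add_distrib, h.sum_det2_cross_eq_zero hzero hφ, add_zero]

end IsCCWPolar

end Polygon

lemma toR2_sum {ι : Type*} (s : Finset ι) (f : ι → ℤ × ℤ) :
    toR2 (∑ i ∈ s, f i) = ∑ i ∈ s, toR2 (f i) := by
  ext <;> simp [toR2, Prod.fst_sum, Prod.snd_sum]

lemma CCW.exists_isCCWPolar {N : ℕ} {b : Fin N → ℝ × ℝ} (h : CCW b) :
    ∃ B θ R : ℕ → _, IsCCWPolar N B θ R ∧ ∀ i : Fin N, B i = b i := by
  obtain ⟨θ, r, hmono, hwrap, hr⟩ := h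
  let ext {α : Type} [Zero α] (f : Fin N → α) (i : ℕ) : α := if hi : i < N then f ⟨i, hi⟩ else 0
  refine ⟨ext b, ext θ, ext r, ⟨fun i hi => ?_, fun i hi => ?_, fun i j hij hj => ?_,
    fun i j hi hj => ?_⟩, fun i => by simp [ext]⟩
  · simpa [ext, hi] using (hr ⟨i, hi⟩).2
  · simpa [ext, hi] using (hr ⟨i, hi⟩).1
  · simpa [ext, hj, hij.trans_lt hj] using
      hmono (show (⟨i, hij.trans_lt hj⟩ : Fin N) ≤ ⟨j, hj⟩ from hij)
  · simpa [ext, hi, hj] using hwrap ⟨i, hi⟩ ⟨j, hj⟩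

lemma sum_fin_ite_lt {N : ℕ} (f : ℕ → ℕ → ℝ) :
    ∑ i : Fin N, ∑ j : Fin N, (if i < j then f i j else 0) =
      ∑ j ∈ range N, ∑ i ∈ range j, f i j := by
  rw [sum_comm]
  simp only [Fin.lt_def]
  rw [Fin.sum_univ_eq_sum_range (fun j => ∑ i : Fin N, if (i : ℕ) < j then f i j else 0)]
  refine sum_congr rfl fun j hj => ?_
  rw [Fin.sum_univ_eq_sum_range (fun i => if i < j then f i j else 0), ← sum_filter]
  congr 1
  ext i
  simp only [mem_filter, mem_range] at hj ⊢
  omega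

lemma sum_Iic_fin_eq_partialSum {N : ℕ} (B : ℕ → ℝ × ℝ) (k : Fin N) :
    ∑ i ∈ Iic k, B i = partialSum B (k + 1) := by
  rw [partialSum, Nat.range_succ_eq_Iic, ← Fin.map_valEmbedding_Iic, sum_map]
  rfl

theorem stmt5_general (N : ℕ) (b : Fin N → ℤ × ℤ)
    (hspan : Submodule.span ℝ (Set.range fun i => toR2 (b i)) = ⊤)
    (hsum : ∑ i, b i = 0)
    (hccw : CCW fun i => toR2 (b i))
    (C : Set (ℝ × ℝ)) (hC : IsSecCone (fun i => toR2 (b i)) C) :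
    MeasureTheory.volume
        (convexHull ℝ (Set.range fun k : Fin N => ∑ i ∈ Finset.Iic k, toR2 (b i))) =
      ENNReal.ofReal
        (2⁻¹ * (∑ i, ∑ j, if i < j then |det2 (toR2 (b i)) (toR2 (b j))| else 0)
          - LCsum (fun i => toR2 (b i)) C) := by
  obtain ⟨B, θ, R, hP, hB⟩ := hccw.exists_isCCWPolar
  have hzero : partialSum B N = 0 := by
    rw [partialSum, ← Fin.sum_univ_eq_sum_range]
    simp only [hB, ← toR2_sum, hsum]
    simp [toR2]
  simp only [← hB] at hspan hC ⊢
  obtain ⟨x, hx, rfl⟩ := hC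
  rw [LCsum_closure_connectedComponentIn _ hx]
  simp only [sum_Iic_fin_eq_partialSum, ite_and]
  rw [← polygon, hP.volume_polygon hzero (hP.pi_lt_spread hzero hspan),
    sum_fin_ite_lt (fun i j => |det2 (B i) (B j)|),
    sum_fin_ite_lt (fun i j => if x ∈ posCone (B i) (B j) then |det2 (B i) (B j)| else 0),
    hP.sum_ite_mem_posCone hzero fun m hm hxm => hx (Set.mem_iUnion.2 ⟨⟨m, hm⟩, hxm⟩)]
  simp only [mul_sum, ← sum_sub_distrib]
  exact congrArg _ (sum_congr rfl fun _ _ => sum_congr rfl fun _ _ => by ring)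

/-- area Δ = (1/2)·Σ_{i<j} |det(b i,b j)| − Σ_{{i,j} ∈ L_C} |det(b i,b j)|
for every 2-dimensional cone `C` of the secondary fan. -/
theorem stmt5 (N : ℕ) (b : Fin N → ℤ × ℤ)
    (hnz : ∀ i, b i ≠ 0)
    (hspan : Submodule.span ℝ (Set.range fun i => toR2 (b i)) = ⊤)
    (hsum : ∑ i, b i = 0)
    (hccw : CCW fun i => toR2 (b i))
    (C : Set (ℝ × ℝ)) (hC : IsSecCone (fun i => toR2 (b i)) C) :
    MeasureTheory.volume
        (convexHull ℝ (Set.range fun k : Fin N => ∑ i ∈ Finset.Iic k, toR2 (b i))) =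
      ENNReal.ofReal
        (2⁻¹ * (∑ i, ∑ j, if i < j then |det2 (toR2 (b i)) (toR2 (b j))| else 0)
          - LCsum (fun i => toR2 (b i)) C) :=
  stmt5_general N b hspan hsum hccw C hC
end
end

section
/- Let N ≥ 3, set k+1 = N−2, and let a_1,…,a_N ∈ ℤ^{k+1} generate ℤ^{k+1} as an abelian group. Let L = {ℓ ∈ ℤ^N : Σ ℓ_i·a_i = 0}, assume that for every i there exists ℓ ∈ L with ℓ_i ≠ 0, and let B be a 2×N integer matrix whose rows form a ℤ-basis of L, with columns b_1,…,b_N. Then: (a) for every i, the linear relation Σ_{j=1}^N det(b_i,b_j)·a_j = 0 is a minimal linear dependence relation among a_1,…,a_N; and (b) every minimal linear dependence relation Σ_{j=1}^N α_j·a_j = 0 (with α ∈ ℚ^N not all zero) is a nonzero rational scalar multiple of the relation Σ_{j=1}^N det(b_i,b_j)·a_j = 0 for some i. -/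
/-!
Every rational relation among the `a j` is a rational combination `x • B 0 + y • B 1` of the rows
of `B`: clear denominators and use that the rows span the integer relations. Since the column
`b i` is nonzero, such a combination that vanishes at `i` is a multiple of `j ↦ det(b i, b j)`.
So the only relations supported in the support of `det(b i, ·)` are its multiples, which makes that
support minimally dependent. Conversely, a minimal relation `α` vanishes at some `i`: otherwise its
support is everything, and `det(b i, ·)` would be a nonzero relation on a proper subset of it.
Hence `α` is a multiple of `det(b i, ·)`.
-/

/-- The subsequence of the family `v` indexed by `S` is minimally dependent:
it is linearly dependent over `ℚ`, but every proper subsequence is linearly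
independent over `ℚ`. -/
def MinimallyDependent {n m : ℕ} (v : Fin n → (Fin m → ℚ)) (S : Set (Fin n)) : Prop :=
  (¬ LinearIndependent ℚ (fun j : S => v j.1)) ∧
  ∀ T : Set (Fin n), T ⊂ S → LinearIndependent ℚ (fun j : T => v j.1)

open Finset

section LinearIndepOn

variable {R K V ι : Type*} [AddCommGroup V] [Fintype ι] {v : ι → V}

theorem linearIndepOn_iff_of_fintype [Ring R] [Module R V] {s : Set ι} :
    LinearIndepOn R v s ↔ ∀ g : ι → R, (∀ i, g i ≠ 0 → i ∈ s) →
      ∑ i, g i • v i = 0 → ∀ i ∈ s, g i = 0 := by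
  classical
  rw [linearIndepOn_iff'']
  refine ⟨fun h g hgs hg i hi => ?_, fun h t g hts htg hg i hi => ?_⟩
  · refine h s.toFinset g (by simp) (fun j hj => ?_) ?_ i (by simpa using hi)
    · by_contra hgj
      exact hj (by simpa using hgs j hgj)
    · rw [← hg, sum_subset (subset_univ _)]
      intro j _ hj
      by_contra hgj
      exact hj (by simpa using hgs j (left_ne_zero_of_smul hgj))
  · refine h g (fun j hj => hts ?_) ?_ i (hts hi)
    · by_contra hjt
      exact hj (htg j hjt)
    · rw [← hg]
      exact (sum_subset (subset_univ _) fun j _ hj => by simp [htg j hj]).symm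

theorem not_linearIndepOn_of_sum_smul_eq_zero [Ring R] [Module R V] {α : ι → R}
    (hα : ∑ i, α i • v i = 0) (hα0 : α ≠ 0) {s : Set ι} (hs : ∀ i, α i ≠ 0 → i ∈ s) :
    ¬ LinearIndepOn R v s := fun h => by
  obtain ⟨i, hi⟩ := Function.ne_iff.mp hα0
  exact hi (linearIndepOn_iff_of_fintype.mp h α hs hα i (hs i hi))

theorem linearIndepOn_of_ssubset_support [Field K] [Module K V] {d : ι → K}
    (hd : ∀ α : ι → K, ∑ i, α i • v i = 0 → (∀ i, α i ≠ 0 → d i ≠ 0) → ∃ c : K, α = c • d)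
    {s : Set ι} (hs : s ⊂ {i | d i ≠ 0}) : LinearIndepOn K v s := by
  refine linearIndepOn_iff_of_fintype.mpr fun g hgs hg i hi => ?_
  obtain ⟨c, rfl⟩ := hd g hg fun j hj => hs.subset (hgs j hj)
  obtain ⟨j, hjd, hjs⟩ := Set.exists_of_ssubset hs
  have hc : c = 0 := by
    by_contra hc
    exact hjs (hgs j (mul_ne_zero hc hjd))
  simp [hc]

end LinearIndepOn

section MinimallyDependent

variable {n m : ℕ} {v : Fin n → Fin m → ℚ}

theorem minimallyDependent_support {d : Fin n → ℚ} (hd : ∑ i, d i • v i = 0) (hd0 : d ≠ 0)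
    (hmul : ∀ α : Fin n → ℚ, ∑ i, α i • v i = 0 → (∀ i, α i ≠ 0 → d i ≠ 0) →
      ∃ c : ℚ, α = c • d) :
    MinimallyDependent v {i | d i ≠ 0} :=
  ⟨not_linearIndepOn_of_sum_smul_eq_zero hd hd0 fun _ => id,
    fun _ hT => linearIndepOn_of_ssubset_support hmul hT⟩

theorem MinimallyDependent.not_support_ssubset {S : Set (Fin n)} (h : MinimallyDependent v S)
    {β : Fin n → ℚ} (hβ : ∑ i, β i • v i = 0) (hβ0 : β ≠ 0) : ¬ {i | β i ≠ 0} ⊂ S :=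
  fun hβS => not_linearIndepOn_of_sum_smul_eq_zero hβ hβ0 (fun _ => id) (h.2 _ hβS)

end MinimallyDependent

section ColDet

variable {R ι : Type*} [CommRing R] (B : Matrix (Fin 2) ι R)

def colDet (i j : ι) : R := B 0 i * B 1 j - B 0 j * B 1 i

theorem colDet_self (i : ι) : colDet B i i = 0 := sub_self _

theorem colDet_map {S : Type*} [CommRing S] (f : R →+* S) (i j : ι) :
    colDet (B.map f) i j = f (colDet B i j) := by
  simp [colDet]

theorem sum_colDet_smul_eq_zero [Fintype ι] {V : Type*} [AddCommGroup V] [Module R V]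
    {v : ι → V} (hB : ∀ r, ∑ j, B r j • v j = 0) (i : ι) : ∑ j, colDet B i j • v j = 0 := by
  simp only [colDet, sub_smul, mul_smul, sum_sub_distrib, ← smul_sum, mul_comm (B 0 _) (B 1 i),
    hB, smul_zero, sub_zero]

theorem colDet_ne_zero [Fintype ι] (hB : LinearIndependent R B) {i : ι}
    (hi : B 0 i ≠ 0 ∨ B 1 i ≠ 0) : colDet B i ≠ 0 := by
  intro h
  have hcomb : ∑ r, ![-B 1 i, B 0 i] r • B r = 0 := by
    ext j
    simpa [Fin.sum_univ_two, colDet, mul_comm, neg_mul, add_comm, sub_eq_add_neg] using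
      congrFun h j
  have h0 := Fintype.linearIndependent_iff.mp hB _ hcomb 0
  have h1 := Fintype.linearIndependent_iff.mp hB _ hcomb 1
  simp only [Matrix.cons_val_zero, Matrix.cons_val_one, Matrix.cons_val_fin_one, neg_eq_zero]
    at h0 h1
  exact hi.elim (· h1) (· h0)

theorem exists_eq_smul_colDet {K : Type*} [Field K] {B : Matrix (Fin 2) ι K} {i : ι}
    (hi : B 0 i ≠ 0 ∨ B 1 i ≠ 0) {x y : K} (hxy : x * B 0 i + y * B 1 i = 0) :
    ∃ c : K, x • B 0 + y • B 1 = c • colDet B i := by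
  rcases hi with h0 | h1
  · refine ⟨y / B 0 i, funext fun j => ?_⟩
    simp only [Pi.add_apply, Pi.smul_apply, smul_eq_mul, colDet]
    field_simp
    linear_combination B 0 j * hxy
  · refine ⟨-x / B 1 i, funext fun j => ?_⟩
    simp only [Pi.add_apply, Pi.smul_apply, smul_eq_mul, colDet]
    field_simp
    linear_combination B 1 j * hxy

end ColDet

section IntegerRelations

variable {ι τ : Type*} [Fintype ι] {a : ι → τ → ℤ}

theorem sum_intCast_smul_eq_zero_iff (ℓ : ι → ℤ) :
    ∑ j, (ℓ j : ℚ) • (fun t => (a j t : ℚ)) = 0 ↔ ∑ j, ℓ j • a j = 0 := by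
  simp only [funext_iff, Finset.sum_apply, Pi.smul_apply, smul_eq_mul, Pi.zero_apply]
  norm_cast

theorem exists_intCast_eq_mul (α : ι → ℚ) :
    ∃ m : ℤ, m ≠ 0 ∧ ∃ ℓ : ι → ℤ, ∀ j, (ℓ j : ℚ) = m * α j := by
  obtain ⟨⟨m, hm⟩, hmα⟩ := IsLocalization.exist_integer_multiples (nonZeroDivisors ℤ) univ α
  choose ℓ hℓ using fun j => hmα j (mem_univ j)
  exact ⟨m, nonZeroDivisors.ne_zero hm, ℓ, fun j => by simpa using hℓ j⟩

variable {B : Matrix (Fin 2) ι ℤ}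
  (hspan : ∀ ℓ : ι → ℤ, ∑ j, ℓ j • a j = 0 →
    ℓ ∈ AddSubgroup.closure (Set.range fun r : Fin 2 => fun j => B r j))
include hspan

theorem exists_eq_add_smul_of_sum_smul_eq_zero {α : ι → ℚ}
    (hα : ∑ j, α j • (fun t => (a j t : ℚ)) = 0) :
    ∃ x y : ℚ, α = x • B.map (↑) 0 + y • B.map (↑) 1 := by
  obtain ⟨m, hm, ℓ, hℓ⟩ := exists_intCast_eq_mul α
  have hℓrel : ∑ j, ℓ j • a j = 0 := by
    rw [← sum_intCast_smul_eq_zero_iff]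
    simp only [hℓ, mul_smul, ← smul_sum, hα, smul_zero]
  obtain ⟨c, hc⟩ := AddSubgroup.exists_of_mem_closure_range _ _ (hspan ℓ hℓrel)
  refine ⟨c 0 / m, c 1 / m, funext fun j => ?_⟩
  have hj : (m : ℚ) * α j = c 0 * B 0 j + c 1 * B 1 j := by
    rw [← hℓ j, hc]
    simp [Fin.sum_univ_two]
  simp only [Pi.add_apply, Pi.smul_apply, Matrix.map_apply, smul_eq_mul]
  field_simp
  linear_combination hj

theorem col_ne_zero_of_exists_relation {i : ι}
    (hi : ∃ ℓ : ι → ℤ, (∑ j, ℓ j • a j = 0) ∧ ℓ i ≠ 0) :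
    B 0 i ≠ 0 ∨ B 1 i ≠ 0 := by
  obtain ⟨ℓ, hℓrel, hℓi⟩ := hi
  obtain ⟨c, rfl⟩ := AddSubgroup.exists_of_mem_closure_range _ _ (hspan ℓ hℓrel)
  by_contra! h
  simp [Fin.sum_univ_two, h] at hℓi

end IntegerRelations

theorem stmt9_general (N : ℕ) (a : Fin N → Fin (N - 2) → ℤ)
    (hcoord : ∀ i, ∃ ℓ : Fin N → ℤ, (∑ j, ℓ j • a j = 0) ∧ ℓ i ≠ 0)
    (B : Matrix (Fin 2) (Fin N) ℤ)
    (hrowsRel : ∀ r : Fin 2, ∑ j, B r j • a j = 0)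
    (hrowsInd : LinearIndependent ℤ (fun r : Fin 2 => (fun j => B r j)))
    (hrowsSpan : ∀ ℓ : Fin N → ℤ, (∑ j, ℓ j • a j = 0) →
      ℓ ∈ AddSubgroup.closure (Set.range fun r : Fin 2 => (fun j => B r j))) :
    (∀ i : Fin N,
      (∑ j, ((B 0 i * B 1 j - B 0 j * B 1 i : ℤ) : ℚ) • (fun t => (a j t : ℚ)) =
        (0 : Fin (N - 2) → ℚ)) ∧
      MinimallyDependent (fun j t => (a j t : ℚ))
        {j | B 0 i * B 1 j - B 0 j * B 1 i ≠ 0}) ∧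
    (∀ α : Fin N → ℚ, α ≠ 0 →
      (∑ j, α j • (fun t => (a j t : ℚ))) = (0 : Fin (N - 2) → ℚ) →
      MinimallyDependent (fun j t => (a j t : ℚ)) {j | α j ≠ 0} →
      ∃ i : Fin N, ∃ c : ℚ, c ≠ 0 ∧
        α = fun j => c * ((B 0 i * B 1 j - B 0 j * B 1 i : ℤ) : ℚ)) := by
  set Bℚ : Matrix (Fin 2) (Fin N) ℚ := B.map (↑)
  have hdet (i j : Fin N) : ((B 0 i * B 1 j - B 0 j * B 1 i : ℤ) : ℚ) = colDet Bℚ i j :=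
    (colDet_map B (Int.castRingHom ℚ) i j).symm
  have hsupp (i : Fin N) :
      {j | B 0 i * B 1 j - B 0 j * B 1 i ≠ 0} = {j | colDet Bℚ i j ≠ 0} := by
    ext j
    simp only [Set.mem_ofPred_eq, ← hdet, Int.cast_ne_zero]
  have hcol (i : Fin N) : Bℚ 0 i ≠ 0 ∨ Bℚ 1 i ≠ 0 := by
    simpa [Bℚ] using col_ne_zero_of_exists_relation hrowsSpan (hcoord i)
  have hrel (i : Fin N) : ∑ j, colDet Bℚ i j • (fun t => (a j t : ℚ)) = 0 :=
    sum_colDet_smul_eq_zero Bℚ (fun r => (sum_intCast_smul_eq_zero_iff _).mpr (hrowsRel r)) i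
  have hne (i : Fin N) : colDet Bℚ i ≠ 0 := fun h =>
    colDet_ne_zero B hrowsInd (col_ne_zero_of_exists_relation hrowsSpan (hcoord i))
      (funext fun j => Int.cast_eq_zero.mp ((hdet i j).trans (congrFun h j)))
  have hmul (i : Fin N) (α : Fin N → ℚ) (hα : ∑ j, α j • (fun t => (a j t : ℚ)) = 0)
      (hαi : α i = 0) : ∃ c : ℚ, α = c • colDet Bℚ i := by
    obtain ⟨x, y, rfl⟩ := exists_eq_add_smul_of_sum_smul_eq_zero hrowsSpan hα
    exact exists_eq_smul_colDet (hcol i) (by simpa [Bℚ] using hαi)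
  simp only [hdet, hsupp]
  refine ⟨fun i => ⟨hrel i, minimallyDependent_support (hrel i) (hne i) fun α hα hαsupp =>
    hmul i α hα (of_not_not fun hαi => hαsupp i hαi (colDet_self Bℚ i))⟩, ?_⟩
  intro α hα0 hα hmin
  obtain ⟨i, hi⟩ : ∃ i, α i = 0 := by
    by_contra! hall
    obtain ⟨i, -⟩ := Function.ne_iff.mp hα0
    exact hmin.not_support_ssubset (hrel i) (hne i)
      ⟨fun j _ => hall j, fun h => h (hall i) (colDet_self Bℚ i)⟩
  obtain ⟨c, rfl⟩ := hmul i α hα hi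
  exact ⟨i, c, by rintro rfl; exact hα0 (zero_smul _ _), rfl⟩

/-- With `a 1, …, a N` generating `ℤ^{N-2}`, relation lattice `L` not
contained in a coordinate hyperplane, and `B` a `2×N` integer matrix whose rows form
a `ℤ`-basis of `L` (columns `b j`):
(a) for every `i`, `Σ_j det(b i,b j) • a j = 0` is a minimal linear dependence relation;
(b) every minimal linear dependence relation `Σ_j α j • a j = 0` with `α ≠ 0` is a
nonzero scalar multiple of one of the relations in (a). -/
theorem stmt9 (N : ℕ) (hN : 3 ≤ N) (a : Fin N → Fin (N - 2) → ℤ)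
    (hgen : AddSubgroup.closure (Set.range a) = ⊤)
    (hcoord : ∀ i, ∃ ℓ : Fin N → ℤ, (∑ j, ℓ j • a j = 0) ∧ ℓ i ≠ 0)
    (B : Matrix (Fin 2) (Fin N) ℤ)
    (hrowsRel : ∀ r : Fin 2, ∑ j, B r j • a j = 0)
    (hrowsInd : LinearIndependent ℤ (fun r : Fin 2 => (fun j => B r j)))
    (hrowsSpan : ∀ ℓ : Fin N → ℤ, (∑ j, ℓ j • a j = 0) →
      ℓ ∈ AddSubgroup.closure (Set.range fun r : Fin 2 => (fun j => B r j))) :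
    (∀ i : Fin N,
      (∑ j, ((B 0 i * B 1 j - B 0 j * B 1 i : ℤ) : ℚ) • (fun t => (a j t : ℚ)) =
        (0 : Fin (N - 2) → ℚ)) ∧
      MinimallyDependent (fun j t => (a j t : ℚ))
        {j | B 0 i * B 1 j - B 0 j * B 1 i ≠ 0}) ∧
    (∀ α : Fin N → ℚ, α ≠ 0 →
      (∑ j, α j • (fun t => (a j t : ℚ))) = (0 : Fin (N - 2) → ℚ) →
      MinimallyDependent (fun j t => (a j t : ℚ)) {j | α j ≠ 0} →
      ∃ i : Fin N, ∃ c : ℚ, c ≠ 0 ∧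
        α = fun j => c * ((B 0 i * B 1 j - B 0 j * B 1 i : ℤ) : ℚ)) :=
  stmt9_general N a hcoord B hrowsRel hrowsInd hrowsSpan
end

section
/- Let b_1,…,b_N ∈ ℤ² be nonzero vectors spanning ℝ² and let λ = (λ_1,…,λ_N) ∈ ℝ^N. For each i define the i-th grid G_i = {x ∈ ℝ² : ⟨x,b_i⟩ + λ_i ∈ ℤ}, a union of parallel lines. Assume the non-resonance condition: for every x ∈ ℝ², the number of indices i with ⟨x,b_i⟩ + λ_i ∈ ℤ is at most 2. Let X = {x ∈ ℝ² : there exist i ≠ j with x ∈ G_i ∩ G_j} be the set of grid intersection points. Then the translation action of ℤ² on ℝ² preserves X, and X consists of exactly Σ_{1 ≤ i < j ≤ N} |det(b_i,b_j)| orbits under this ℤ²-action. -/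
/-!
Translation by `v ∈ ℤ²` preserves every grid, since `⟨v, b_i⟩ ∈ ℤ`. By non-resonance a point of
`X` lies on exactly two grids, so the orbits in `X` split according to that pair `{i, j}`.
Parallel grids never meet: their intersection would contain a line, which crosses a grid `G_k`
with `b_k` not parallel to `b_i` (one exists because the `b_i` span), giving a point on three
grids. For non-parallel `b_i, b_j`, the affine bijection `x ↦ (⟨x,b_i⟩ + λ_i, ⟨x,b_j⟩ + λ_j)`
maps `G_i ∩ G_j` onto `ℤ²` and turns translation by `v` into translation by `B v`, where `B` is
the integer matrix with rows `b_i, b_j`. Hence the orbits in `G_i ∩ G_j` correspond to `ℤ² / B ℤ²`,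
which has `|det B|` elements.
-/

noncomputable section

/-- `det(u,v)` for integer vectors. -/
def detZ (u v : ℤ × ℤ) : ℤ := u.1 * v.2 - v.1 * u.2

/-- The standard inner product on `ℝ²`. -/
def ip (x y : ℝ × ℝ) : ℝ := x.1 * y.1 + x.2 * y.2

/-- The `i`-th grid: `G i = {x ∈ ℝ² : ⟨x, b i⟩ + λ i ∈ ℤ}`. -/
def grid {N : ℕ} (b : Fin N → ℤ × ℤ) (l : Fin N → ℝ) (i : Fin N) : Set (ℝ × ℝ) :=
  {x | ∃ n : ℤ, ip x (toR2 (b i)) + l i = (n : ℝ)}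

/-- The set of grid intersection points. -/
def gridX {N : ℕ} (b : Fin N → ℤ × ℤ) (l : Fin N → ℝ) : Set (ℝ × ℝ) :=
  {x | ∃ i j, i ≠ j ∧ x ∈ grid b l i ∧ x ∈ grid b l j}

open Function

theorem Set.encard_range_eq_of_eq_iff {α β γ : Type*} {f : α → β} {g : α → γ}
    (h : ∀ x y, f x = f y ↔ g x = g y) : (Set.range f).encard = (Set.range g).encard := by
  let e : Quotient (Setoid.ker f) ≃ Quotient (Setoid.ker g) := Quotient.congrRight h
  exact ENat.card_congr
    ((Setoid.quotientKerEquivRange f).symm.trans (e.trans (Setoid.quotientKerEquivRange g)))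

theorem Submodule.natCard_quotient_range_eq_natAbs_det {M : Type*} [AddCommGroup M]
    [Module.Free ℤ M] [Module.Finite ℤ M] (f : M →ₗ[ℤ] M) (hf : Injective f) :
    Nat.card (M ⧸ LinearMap.range f) = (LinearMap.det f).natAbs := by
  rw [← Submodule.natAbs_det_equiv _ (LinearEquiv.ofInjective f hf)]
  rfl

theorem Set.eq_or_eq_of_ncard_le_two {α : Type*} [Finite α] {s : Set α} (hs : s.ncard ≤ 2)
    {i j k : α} (hij : i ≠ j) (hi : i ∈ s) (hj : j ∈ s) (hk : k ∈ s) : k = i ∨ k = j := by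
  by_contra! hne
  have h3 : ({i, j, k} : Set α).ncard = 3 :=
    Set.ncard_eq_three.mpr ⟨i, j, k, hij, hne.1.symm, hne.2.symm, rfl⟩
  have := Set.ncard_le_ncard (Set.insert_subset hi (Set.insert_subset hj
    (Set.singleton_subset_iff.mpr hk))) s.toFinite
  omega

section PairMap

variable {R : Type*} [CommRing R]

def pairMap (u v : R × R) : R × R →ₗ[R] R × R :=
  Matrix.toLin (Module.Basis.finTwoProd R) (Module.Basis.finTwoProd R) !![u.1, u.2; v.1, v.2]

theorem pairMap_apply (u v x : R × R) :
    pairMap u v x = (u.1 * x.1 + u.2 * x.2, v.1 * x.1 + v.2 * x.2) :=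
  Matrix.toLin_finTwoProd_apply _ _ _ _ _

theorem det_pairMap (u v : R × R) : LinearMap.det (pairMap u v) = u.1 * v.2 - v.1 * u.2 := by
  rw [pairMap, LinearMap.det_toLin, Matrix.det_fin_two_of]
  ring

theorem pairMap_injective [IsDomain R] {u v : R × R} (h : u.1 * v.2 - v.1 * u.2 ≠ 0) :
    Injective (pairMap u v) := by
  refine (injective_iff_map_eq_zero _).mpr fun x hx => ?_
  rw [pairMap_apply, Prod.mk_eq_zero] at hx
  obtain ⟨hu, hv⟩ := hx
  refine Prod.ext (mul_right_cancel₀ h ?_) (mul_right_cancel₀ h ?_) <;>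
    simp only [Prod.fst_zero, Prod.snd_zero, zero_mul]
  · linear_combination v.2 * hu - u.2 * hv
  · linear_combination u.1 * hv - v.1 * hu

end PairMap

theorem toR2_add (v w : ℤ × ℤ) : toR2 (v + w) = toR2 v + toR2 w := by
  simp [toR2]

theorem toR2_injective : Injective toR2 := fun v w h => by
  simp only [toR2, Prod.mk.injEq, Int.cast_inj] at h
  exact Prod.ext h.1 h.2

theorem ip_add_left (x y z : ℝ × ℝ) : ip (x + y) z = ip x z + ip y z := by
  simp only [ip, Prod.fst_add, Prod.snd_add]
  ring

theorem ip_toR2_toR2 (v w : ℤ × ℤ) : ip (toR2 v) (toR2 w) = ((v.1 * w.1 + v.2 * w.2 : ℤ) : ℝ) := by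
  simp [ip, toR2]

theorem pairMap_toR2_apply (u v : ℤ × ℤ) (x : ℝ × ℝ) :
    pairMap (toR2 u) (toR2 v) x = (ip x (toR2 u), ip x (toR2 v)) := by
  simp only [pairMap_apply, ip, mul_comm]

theorem pairMap_toR2_toR2 (u v w : ℤ × ℤ) :
    pairMap (toR2 u) (toR2 v) (toR2 w) = toR2 (pairMap u v w) := by
  simp [pairMap_apply, toR2]

theorem det_pairMap_toR2 (u v : ℤ × ℤ) :
    LinearMap.det (pairMap (toR2 u) (toR2 v)) = detZ u v := by
  simp [det_pairMap, toR2, detZ]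

theorem detZ_self (u : ℤ × ℤ) : detZ u u = 0 :=
  sub_self _

theorem ip_add_smul_rot (x : ℝ × ℝ) (t : ℝ) (u w : ℤ × ℤ) :
    ip (x + t • (-((u.2 : ℤ) : ℝ), ((u.1 : ℤ) : ℝ))) (toR2 w) = ip x (toR2 w) + t * detZ u w := by
  simp only [ip, toR2, detZ, Prod.fst_add, Prod.snd_add, Prod.smul_mk, smul_eq_mul]
  push_cast
  ring

def intOrbit (x : ℝ × ℝ) : Set (ℝ × ℝ) := {y | ∃ v : ℤ × ℤ, y = x + toR2 v}

theorem intOrbit_eq_intOrbit_iff {x y : ℝ × ℝ} :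
    intOrbit x = intOrbit y ↔ ∃ v : ℤ × ℤ, x = y + toR2 v := by
  constructor
  · intro h
    have hx : x ∈ intOrbit x := ⟨0, by simp [toR2]⟩
    rwa [h] at hx
  · rintro ⟨v, rfl⟩
    ext z
    constructor
    · rintro ⟨w, rfl⟩
      exact ⟨v + w, by rw [toR2_add, add_assoc]⟩
    · rintro ⟨w, rfl⟩
      exact ⟨w - v, by rw [add_assoc, ← toR2_add, add_sub_cancel]⟩

section Grids

variable {N : ℕ} {b : Fin N → ℤ × ℤ} {l : Fin N → ℝ}

theorem add_toR2_mem_grid {i : Fin N} {x : ℝ × ℝ} (hx : x ∈ grid b l i) (v : ℤ × ℤ) :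
    x + toR2 v ∈ grid b l i := by
  obtain ⟨n, hn⟩ := hx
  refine ⟨n + (v.1 * (b i).1 + v.2 * (b i).2), ?_⟩
  rw [ip_add_left, ip_toR2_toR2]
  push_cast
  linarith

theorem add_toR2_mem_gridX {x : ℝ × ℝ} (hx : x ∈ gridX b l) (v : ℤ × ℤ) :
    x + toR2 v ∈ gridX b l := by
  obtain ⟨i, j, hij, hi, hj⟩ := hx
  exact ⟨i, j, hij, add_toR2_mem_grid hi v, add_toR2_mem_grid hj v⟩

theorem mem_grid_inter_iff {i j : Fin N} {x : ℝ × ℝ} :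
    x ∈ grid b l i ∩ grid b l j ↔
      ∃ m : ℤ × ℤ, pairMap (toR2 (b i)) (toR2 (b j)) x + (l i, l j) = toR2 m := by
  rw [pairMap_toR2_apply]
  simp only [Set.mem_inter_iff, grid, Set.mem_ofPred_eq, Prod.mk_add_mk, toR2, Prod.ext_iff,
    Prod.exists, exists_and_left, exists_and_right]

theorem encard_image_intOrbit_grid_inter {i j : Fin N} (hd : detZ (b i) (b j) ≠ 0) :
    (intOrbit '' (grid b l i ∩ grid b l j)).encard = (detZ (b i) (b j)).natAbs := by
  set A := pairMap (toR2 (b i)) (toR2 (b j))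
  set B := pairMap (b i) (b j)
  have hA : Injective A := pairMap_injective (by
    rw [← det_pairMap, det_pairMap_toR2]
    exact_mod_cast hd)
  have hB : Injective B := pairMap_injective hd
  choose ψ hψ using fun m : ℤ × ℤ =>
    LinearMap.injective_iff_surjective.mp hA (toR2 m - (l i, l j))
  have hrange : Set.range ψ = grid b l i ∩ grid b l j := by
    ext x
    rw [mem_grid_inter_iff]
    constructor
    · rintro ⟨m, rfl⟩
      exact ⟨m, by rw [hψ, sub_add_cancel]⟩
    · rintro ⟨m, hm⟩
      exact ⟨m, hA (by rw [hψ, ← hm, add_sub_cancel_right])⟩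
  have hker : ∀ m m', intOrbit (ψ m) = intOrbit (ψ m') ↔
      Submodule.Quotient.mk (p := LinearMap.range B) m = Submodule.Quotient.mk m' := by
    intro m m'
    rw [intOrbit_eq_intOrbit_iff, Submodule.Quotient.eq, LinearMap.mem_range]
    refine exists_congr fun w => ?_
    rw [← hA.eq_iff, map_add, hψ, hψ, pairMap_toR2_toR2, sub_add_eq_add_sub, sub_left_inj,
      ← toR2_add, toR2_injective.eq_iff, eq_sub_iff_add_eq', eq_comm]
  have hcard : Nat.card ((ℤ × ℤ) ⧸ LinearMap.range B) = (detZ (b i) (b j)).natAbs := by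
    rw [Submodule.natCard_quotient_range_eq_natAbs_det B hB, det_pairMap, detZ]
  have : Finite ((ℤ × ℤ) ⧸ LinearMap.range B) :=
    Nat.finite_of_card_ne_zero (by rwa [hcard, Int.natAbs_ne_zero])
  rw [← hrange, ← Set.range_comp, Set.encard_range_eq_of_eq_iff (f := intOrbit ∘ ψ) hker,
    Set.range_eq_univ.mpr (Submodule.Quotient.mk_surjective _), Set.encard_univ,
    ENat.card_eq_coe_natCard, hcard]

theorem exists_detZ_ne_zero (hspan : Submodule.span ℝ (Set.range fun i => toR2 (b i)) = ⊤)
    {i : Fin N} (hi : b i ≠ 0) : ∃ k, detZ (b i) (b k) ≠ 0 := by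
  by_contra! h
  set f : ℝ × ℝ →ₗ[ℝ] ℝ :=
    ((b i).2 : ℝ) • LinearMap.fst ℝ ℝ ℝ - ((b i).1 : ℝ) • LinearMap.snd ℝ ℝ ℝ
  have hf : f = 0 := by
    rw [← LinearMap.ker_eq_top, eq_top_iff, ← hspan, Submodule.span_le]
    rintro _ ⟨k, rfl⟩
    have hk := congrArg (Int.cast : ℤ → ℝ) (h k)
    simp only [detZ, Int.cast_sub, Int.cast_mul, Int.cast_zero] at hk
    simp only [SetLike.mem_coe, LinearMap.mem_ker, f, toR2, LinearMap.sub_apply,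
      LinearMap.smul_apply, LinearMap.fst_apply, LinearMap.snd_apply, smul_eq_mul]
    linarith
  have h1 := LinearMap.congr_fun hf (1, 0)
  have h2 := LinearMap.congr_fun hf (0, 1)
  simp only [f, LinearMap.sub_apply, LinearMap.smul_apply, LinearMap.fst_apply,
    LinearMap.snd_apply, LinearMap.zero_apply, smul_eq_mul, mul_one, mul_zero, sub_zero, zero_sub,
    neg_eq_zero, Int.cast_eq_zero] at h1 h2
  exact hi (Prod.ext h2 h1)

theorem grid_inter_eq_empty_of_detZ_eq_zero (hnz : ∀ i, b i ≠ 0)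
    (hspan : Submodule.span ℝ (Set.range fun i => toR2 (b i)) = ⊤)
    (hnonres : ∀ x : ℝ × ℝ, ({i : Fin N | x ∈ grid b l i}).ncard ≤ 2)
    {i j : Fin N} (hij : i ≠ j) (hd : detZ (b i) (b j) = 0) :
    grid b l i ∩ grid b l j = ∅ := by
  refine Set.eq_empty_of_forall_notMem fun x ⟨⟨m, hm⟩, ⟨n, hn⟩⟩ => ?_
  obtain ⟨k, hk⟩ := exists_detZ_ne_zero hspan (hnz i)
  -- Both grids contain the line through `x` orthogonal to `b i`; it meets grid `k`.
  set t : ℝ := -(ip x (toR2 (b k)) + l k) / detZ (b i) (b k)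
  set z := x + t • (-(((b i).2 : ℤ) : ℝ), (((b i).1 : ℤ) : ℝ))
  have hzi : z ∈ grid b l i := ⟨m, by rw [ip_add_smul_rot, detZ_self]; simpa using hm⟩
  have hzj : z ∈ grid b l j := ⟨n, by rw [ip_add_smul_rot, hd]; simpa using hn⟩
  have hzk : z ∈ grid b l k := ⟨0, by
    rw [ip_add_smul_rot, div_mul_cancel₀ _ (by exact_mod_cast hk)]
    push_cast
    ring⟩
  rcases Set.eq_or_eq_of_ncard_le_two (hnonres z) hij hzi hzj hzk with rfl | rfl
  · exact hk (detZ_self _)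
  · exact hk hd

theorem disjoint_image_intOrbit_grid_inter
    (hnonres : ∀ x : ℝ × ℝ, ({i : Fin N | x ∈ grid b l i}).ncard ≤ 2)
    {p q : Fin N × Fin N} (hp : p.1 < p.2) (hq : q.1 < q.2) (hpq : p ≠ q) :
    Disjoint (intOrbit '' (grid b l p.1 ∩ grid b l p.2))
      (intOrbit '' (grid b l q.1 ∩ grid b l q.2)) := by
  rw [Set.disjoint_left]
  rintro _ ⟨x, ⟨hx1, hx2⟩, rfl⟩ ⟨y, ⟨hy1, hy2⟩, hxy⟩
  obtain ⟨v, rfl⟩ := intOrbit_eq_intOrbit_iff.mp hxy.symm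
  have h1 := Set.eq_or_eq_of_ncard_le_two (hnonres _) hp.ne hx1 hx2 (add_toR2_mem_grid hy1 v)
  have h2 := Set.eq_or_eq_of_ncard_le_two (hnonres _) hp.ne hx1 hx2 (add_toR2_mem_grid hy2 v)
  apply hpq
  rw [Prod.ext_iff]
  omega

theorem gridX_eq_biUnion :
    gridX b l = ⋃ p ∈ {p : Fin N × Fin N | p.1 < p.2}, grid b l p.1 ∩ grid b l p.2 := by
  ext x
  simp only [gridX, Set.mem_iUnion, Set.mem_ofPred_eq, Set.mem_inter_iff, exists_prop, Prod.exists]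
  constructor
  · rintro ⟨i, j, hij, hi, hj⟩
    rcases hij.lt_or_gt with h | h
    exacts [⟨i, j, h, hi, hj⟩, ⟨j, i, h, hj, hi⟩]
  · rintro ⟨i, j, h, hi, hj⟩
    exact ⟨i, j, h.ne, hi, hj⟩

theorem encard_image_intOrbit_gridX (hnz : ∀ i, b i ≠ 0)
    (hspan : Submodule.span ℝ (Set.range fun i => toR2 (b i)) = ⊤)
    (hnonres : ∀ x : ℝ × ℝ, ({i : Fin N | x ∈ grid b l i}).ncard ≤ 2) :
    (intOrbit '' gridX b l).encard =
      ((∑ i, ∑ j, if i < j then (detZ (b i) (b j)).natAbs else 0 : ℕ) : ℕ∞) := by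
  have hpiece : ∀ p ∈ {p : Fin N × Fin N | p.1 < p.2},
      (intOrbit '' (grid b l p.1 ∩ grid b l p.2)).encard = (detZ (b p.1) (b p.2)).natAbs := by
    intro p hp
    by_cases hd : detZ (b p.1) (b p.2) = 0
    · rw [grid_inter_eq_empty_of_detZ_eq_zero hnz hspan hnonres (ne_of_lt hp) hd, hd]
      simp
    · exact encard_image_intOrbit_grid_inter hd
  rw [gridX_eq_biUnion, Set.image_iUnion₂,
    (Set.toFinite {p : Fin N × Fin N | p.1 < p.2}).encard_biUnion
      fun p hp q hq hpq => disjoint_image_intOrbit_grid_inter hnonres hp hq hpq,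
    finsum_mem_congr rfl hpiece, finsum_mem_def, finsum_eq_sum_of_fintype, Fintype.sum_prod_type]
  simp [Set.indicator_apply]

end Grids

/-- under the non-resonance condition, the set `X` of grid intersection
points is invariant under translation by `ℤ²` and consists of exactly
`Σ_{i<j} |det(b i, b j)|` orbits of this `ℤ²`-action. -/
theorem stmt13 (N : ℕ) (b : Fin N → ℤ × ℤ) (l : Fin N → ℝ)
    (hnz : ∀ i, b i ≠ 0)
    (hspan : Submodule.span ℝ (Set.range fun i => toR2 (b i)) = ⊤)
    (hnonres : ∀ x : ℝ × ℝ, ({i : Fin N | x ∈ grid b l i}).ncard ≤ 2) :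
    (∀ v : ℤ × ℤ, ∀ x ∈ gridX b l, x + toR2 v ∈ gridX b l) ∧
    {O : Set (ℝ × ℝ) | ∃ x ∈ gridX b l,
        O = {y | ∃ v : ℤ × ℤ, y = x + toR2 v}}.ncard =
      ∑ i, ∑ j, if i < j then (detZ (b i) (b j)).natAbs else 0 := by
  refine ⟨fun v x hx => add_toR2_mem_gridX hx v, ?_⟩
  have horbits : {O : Set (ℝ × ℝ) | ∃ x ∈ gridX b l,
      O = {y | ∃ v : ℤ × ℤ, y = x + toR2 v}} = intOrbit '' gridX b l := by
    ext O
    simp only [Set.mem_ofPred_eq, Set.mem_image, intOrbit, eq_comm]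
  rw [horbits, Set.ncard_def, encard_image_intOrbit_gridX hnz hspan hnonres, ENat.toNat_natCast]
end
end
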